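/- arXiv:1811.00603 — 10 statements merged into one kernel-verified Lean document; each statement's English description precedes it below -/
import Mathlib

section
/- Let X be a metric space, n ≥ 2, and let x, y : Fin n → X be n-tuples of points of X. Define the minimum separation sep(x) := min over pairs i ≠ j of dist(x_i, x_j). Then |sep(x) − sep(y)| ≤ 2·d_H(range x, range y), where d_H is the Hausdorff distance between the images of the two tuples; i.e., the minimum separation is 2-Lipschitz with respect to the Hausdorff distance. -/
open Metric Set

lemma sep_key {X : Type*} [MetricSpace X] {n : ℕ} (hn : 2 ≤ n) (x y : Fin n → X) :
    sInf {d : ℝ | ∃ i j : Fin n, i ≠ j ∧ d = dist (x i) (x j)} ≤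
      sInf {d : ℝ | ∃ i j : Fin n, i ≠ j ∧ d = dist (y i) (y j)} +
        2 * Metric.hausdorffDist (Set.range x) (Set.range y) := by
  set H := Metric.hausdorffDist (Set.range x) (Set.range y) with hHdef
  set Sx := {d : ℝ | ∃ i j : Fin n, i ≠ j ∧ d = dist (x i) (x j)} with hSx
  set Sy := {d : ℝ | ∃ i j : Fin n, i ≠ j ∧ d = dist (y i) (y j)} with hSy
  have : Nonempty (Fin n) := ⟨⟨0, by omega⟩⟩
  have hH : 0 ≤ H := Metric.hausdorffDist_nonneg
  have hSx_bdd : BddBelow Sx := ⟨0, by rintro d ⟨i, j, -, rfl⟩; exact dist_nonneg⟩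
  have hSy_nonneg : 0 ≤ sInf Sy :=
    Real.sInf_nonneg (by rintro d ⟨i, j, -, rfl⟩; exact dist_nonneg)
  have hSy_fin : Sy.Finite := by
    apply (Set.finite_range (fun p : Fin n × Fin n => dist (y p.1) (y p.2))).subset
    rintro d ⟨i, j, -, rfl⟩
    exact ⟨(i, j), rfl⟩
  have h01 : (⟨0, by omega⟩ : Fin n) ≠ ⟨1, by omega⟩ := by
    simp [Fin.ext_iff]
  have hSy_ne : Sy.Nonempty := ⟨_, ⟨⟨0, by omega⟩, ⟨1, by omega⟩, h01, rfl⟩⟩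
  obtain ⟨k, l, hkl, hd⟩ := hSy_ne.csInf_mem hSy_fin
  have hedist : EMetric.hausdorffEdist (Set.range x) (Set.range y) ≠ ⊤ :=
    Metric.hausdorffEdist_ne_top_of_nonempty_of_bounded (Set.range_nonempty x)
      (Set.range_nonempty y) (Set.finite_range x).isBounded (Set.finite_range y).isBounded
  have hg : ∀ i : Fin n, ∃ m : Fin n, dist (x i) (y m) ≤ H := by
    intro i
    have h1 : Metric.infDist (x i) (Set.range y) ≤ H :=
      Metric.infDist_le_hausdorffDist_of_mem (Set.mem_range_self i) hedist
    obtain ⟨z, hz, hz2⟩ :=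
      (Set.finite_range y).isCompact.exists_infDist_eq_dist (Set.range_nonempty y) (x i)
    obtain ⟨m, rfl⟩ := hz
    exact ⟨m, by rw [← hz2]; exact h1⟩
  choose g hgd using hg
  by_cases hinj : Function.Injective g
  · have hsurj : Function.Surjective g := Finite.injective_iff_surjective.mp hinj
    obtain ⟨i, hi⟩ := hsurj k
    obtain ⟨j, hj⟩ := hsurj l
    have hij : i ≠ j := by
      rintro rfl; exact hkl (hi ▸ hj ▸ rfl)
    have h2 : sInf Sx ≤ dist (x i) (x j) := csInf_le hSx_bdd ⟨i, j, hij, rfl⟩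
    have h3 : dist (x i) (x j) ≤ dist (x i) (y k) + dist (y k) (y l) + dist (y l) (x j) :=
      dist_triangle4 _ _ _ _
    have h4 : dist (x i) (y k) ≤ H := hi ▸ hgd i
    have h5 : dist (y l) (x j) ≤ H := by rw [dist_comm]; exact hj ▸ hgd j
    have h6 : dist (y k) (y l) = sInf Sy := hd.symm
    linarith
  · obtain ⟨a, b, hab, hne⟩ := Function.not_injective_iff.mp hinj
    have h2 : sInf Sx ≤ dist (x a) (x b) := csInf_le hSx_bdd ⟨a, b, hne, rfl⟩
    have h3 : dist (x a) (x b) ≤ dist (x a) (y (g b)) + dist (y (g b)) (x b) := by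
      exact dist_triangle _ _ _
    have h4 : dist (x a) (y (g b)) ≤ H := hab ▸ hgd a
    have h5 : dist (y (g b)) (x b) ≤ H := by rw [dist_comm]; exact hgd b
    linarith

/-- The minimum separation of an `n`-tuple is `2`-Lipschitz with respect to the
Hausdorff distance between the ranges of the tuples. -/
theorem stmt_1 {X : Type*} [MetricSpace X] {n : ℕ} (hn : 2 ≤ n) (x y : Fin n → X) :
    |sInf {d : ℝ | ∃ i j : Fin n, i ≠ j ∧ d = dist (x i) (x j)} -
        sInf {d : ℝ | ∃ i j : Fin n, i ≠ j ∧ d = dist (y i) (y j)}| ≤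
      2 * Metric.hausdorffDist (Set.range x) (Set.range y) := by
  rw [abs_sub_le_iff]
  constructor
  · linarith [sep_key hn x y]
  · have := sep_key hn y x
    rw [Metric.hausdorffDist_comm] at this
    linarith
end

section
/- Let X be a real normed space, let n ≥ 2 and 1 ≤ k ≤ n−1, and let L ≥ 0. Let N(X₀(n)) denote the set of all nonempty finite subsets x ⊆ X with at most n elements, diam(x) = 1 and 0 ∈ x. Suppose R assigns to each x ∈ N(X₀(n)) a nonempty subset R(x) ⊆ X with at most k elements such that: (a) d_H(R(x), R(y)) ≤ L·d_H(x,y) for all x, y ∈ N(X₀(n)); (b) R(x + v) = R(x) + v whenever x ∈ N(X₀(n)), v ∈ X and x + v ∈ N(X₀(n)); (c) R(x) is contained in the convex hull of x; and (d) R(x) = x whenever x has at most k elements. Then there exists a map r assigning to each nonempty subset x ⊆ X with at most n elements a nonempty subset r(x) ⊆ X with at most k elements, such that r(x) = x whenever x has at most k elements, r(t·x + v) = t·r(x) + v for all t ≥ 0 and v ∈ X, and d_H(r(x), r(y)) ≤ (6L + 5)·d_H(x, y) for all x, y. -/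
/-!
For a finite set `x` with at least two points and a base point `a ∈ x`, the rescaled copy
`N_a(x) = (diam x)⁻¹ • (x - a)` lies in `N(X₀(n))`, and one sets `r(x) = diam x • R(N_a(x)) + a`,
while singletons are fixed. Translation invariance of `R` makes `r(x)` independent of the base
point, and homogeneity of `r` follows.

For the Lipschitz bound take `a ∈ x` and `b ∈ y` with `‖a - b‖ ≤ d_H(x, y)`. Since
`|diam x - diam y| ≤ 2 d_H(x, y)`, the normalized sets are at most `4 d_H(x, y) / diam x` apart,
and since `R(N) ⊆ conv N` lies in the unit ball, changing scale and base point moves `r` by at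
most `3 d_H(x, y)`; hence `Lip(r) ≤ 4L + 3`. Against a singleton `{b}` one uses `r(y) ⊆ conv y`,
which gives `d_H({b}, r(y)) ≤ d_H({b}, y)`.
-/

open Metric Set Bornology
open scoped Pointwise

theorem diam_pos_of_encard_le {α : Type*} [MetricSpace α] {n : ℕ} {x : Set α}
    (hx : x.encard ≤ n) (hx' : x.Nontrivial) : 0 < diam x :=
  diam_pos hx' (finite_of_encard_le_coe hx).isBounded

section HausdorffDistance

variable {α : Type*} [PseudoMetricSpace α]

theorem exists_dist_le_hausdorffDist {s t : Set α} {a : α} (ha : a ∈ s) (hs : IsBounded s)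
    (ht : IsCompact t) (ht' : t.Nonempty) : ∃ b ∈ t, dist a b ≤ hausdorffDist s t := by
  obtain ⟨b, hb, hab⟩ := ht.exists_infDist_eq_dist ht' a
  exact ⟨b, hb, hab ▸ infDist_le_hausdorffDist_of_mem ha
    (hausdorffEDist_ne_top_of_nonempty_of_bounded ⟨a, ha⟩ ht' hs ht.isBounded)⟩

theorem hausdorffDist_image_le {β : Type*} [PseudoMetricSpace β] {f : α → β} {c : ℝ} (hc : 0 ≤ c)
    (hf : ∀ z w, dist (f z) (f w) ≤ c * dist z w) {s t : Set α}
    (hs : IsCompact s) (hs' : s.Nonempty) (ht : IsCompact t) (ht' : t.Nonempty) :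
    hausdorffDist (f '' s) (f '' t) ≤ c * hausdorffDist s t := by
  refine hausdorffDist_le_of_mem_dist (mul_nonneg hc hausdorffDist_nonneg) ?_ ?_
  · rintro _ ⟨z, hz, rfl⟩
    obtain ⟨w, hw, hzw⟩ := exists_dist_le_hausdorffDist hz hs.isBounded ht ht'
    exact ⟨f w, mem_image_of_mem f hw, (hf z w).trans (by gcongr)⟩
  · rintro _ ⟨z, hz, rfl⟩
    obtain ⟨w, hw, hzw⟩ := exists_dist_le_hausdorffDist hz ht.isBounded hs hs'
    refine ⟨f w, mem_image_of_mem f hw, (hf z w).trans ?_⟩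
    rw [hausdorffDist_comm]
    gcongr

theorem hausdorffDist_image_image_le {β : Type*} {f g : β → α} {s : Set β} (hs : s.Nonempty) {r : ℝ}
    (h : ∀ p ∈ s, dist (f p) (g p) ≤ r) : hausdorffDist (f '' s) (g '' s) ≤ r := by
  obtain ⟨p, hp⟩ := hs
  refine hausdorffDist_le_of_mem_dist (dist_nonneg.trans (h p hp)) ?_ ?_
  · rintro _ ⟨z, hz, rfl⟩
    exact ⟨g z, mem_image_of_mem g hz, h z hz⟩
  · rintro _ ⟨z, hz, rfl⟩
    exact ⟨f z, mem_image_of_mem f hz, dist_comm (g z) (f z) ▸ h z hz⟩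

theorem diam_le_diam_add_two_mul_hausdorffDist {s t : Set α} (hs : IsCompact s)
    (hs' : s.Nonempty) (ht : IsBounded t) : diam t ≤ diam s + 2 * hausdorffDist s t := by
  refine diam_le_of_forall_dist_le
    (add_nonneg diam_nonneg (mul_nonneg zero_le_two hausdorffDist_nonneg)) fun z hz w hw => ?_
  obtain ⟨p, hp, hzp⟩ := exists_dist_le_hausdorffDist hz ht hs hs'
  obtain ⟨q, hq, hwq⟩ := exists_dist_le_hausdorffDist hw ht hs hs'
  rw [hausdorffDist_comm] at hzp hwq
  calc dist z w ≤ dist z p + dist p q + dist w q := by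
        rw [dist_comm w q]; exact dist_triangle4 z p q w
    _ ≤ hausdorffDist s t + diam s + hausdorffDist s t := by
        gcongr; exact dist_le_diam_of_mem hs.isBounded hp hq
    _ = diam s + 2 * hausdorffDist s t := by ring

theorem abs_diam_sub_diam_le {s t : Set α} (hs : IsCompact s) (hs' : s.Nonempty)
    (ht : IsCompact t) (ht' : t.Nonempty) : |diam s - diam t| ≤ 2 * hausdorffDist s t := by
  have hst := diam_le_diam_add_two_mul_hausdorffDist hs hs' ht.isBounded
  have hts := diam_le_diam_add_two_mul_hausdorffDist ht ht' hs.isBounded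
  rw [hausdorffDist_comm] at hts
  rw [abs_le]
  constructor <;> linarith

end HausdorffDistance

section NormedSpace

variable {X : Type*} [NormedAddCommGroup X] [NormedSpace ℝ X]

theorem hausdorffDist_singleton_le_of_subset_convexHull (a : X) {s t : Set X}
    (hs : s.Nonempty) (ht : IsCompact t) (hst : s ⊆ convexHull ℝ t) :
    hausdorffDist {a} s ≤ hausdorffDist {a} t := by
  have ht_ball : t ⊆ closedBall a (hausdorffDist {a} t) := fun q hq => by
    obtain ⟨a', ha', hqa⟩ := exists_dist_le_hausdorffDist hq ht.isBounded
      isCompact_singleton (singleton_nonempty a)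
    rw [mem_singleton_iff.1 ha', hausdorffDist_comm] at hqa
    exact hqa
  have hs_ball := hst.trans (convexHull_min ht_ball (convex_closedBall _ _))
  obtain ⟨p, hp⟩ := hs
  refine hausdorffDist_le_of_mem_dist hausdorffDist_nonneg ?_ ?_
  · rintro _ rfl
    exact ⟨p, hp, mem_closedBall'.1 (hs_ball hp)⟩
  · exact fun q hq => ⟨a, rfl, hs_ball hq⟩

theorem dist_smul_add_smul_add_le {p : X} (hp : ‖p‖ ≤ 1) (c d : ℝ) (a b : X) :
    dist (c • p + a) (d • p + b) ≤ |c - d| + dist a b :=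
  calc dist (c • p + a) (d • p + b) = ‖(c - d) • p + (a - b)‖ := by
        rw [dist_eq_norm]; congr 1; module
    _ ≤ |c - d| * ‖p‖ + dist a b := by
        rw [dist_eq_norm, ← Real.norm_eq_abs, ← norm_smul]; exact norm_add_le _ _
    _ ≤ |c - d| + dist a b := by
        gcongr; exact mul_le_of_le_one_right (abs_nonneg _) hp

theorem dist_inv_smul_sub_inv_smul_sub_le {c d : ℝ} (hc : 0 < c) (hd : 0 < d) {q a b : X}
    (hq : ‖q - b‖ ≤ d) : dist (c⁻¹ • (q - a)) (d⁻¹ • (q - b)) ≤ c⁻¹ * (|c - d| + dist a b) := by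
  set p := d⁻¹ • (q - b)
  have hp : ‖p‖ ≤ 1 := by
    rw [norm_smul, Real.norm_eq_abs, abs_of_pos (inv_pos.2 hd)]
    exact inv_mul_le_one_of_le₀ hq hd.le
  have hdp : d • p = q - b := smul_inv_smul₀ hd.ne' _
  have hvec : c⁻¹ • (q - a) - p = c⁻¹ • ((d • p + b) - (c • p + a)) := by
    rw [hdp]
    simp only [smul_sub, smul_add, smul_smul, inv_mul_cancel₀ hc.ne', one_smul]
    abel
  calc dist (c⁻¹ • (q - a)) p = c⁻¹ * dist (d • p + b) (c • p + a) := by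
        rw [dist_eq_norm, hvec, norm_smul, Real.norm_eq_abs, abs_of_pos (inv_pos.2 hc),
          dist_eq_norm]
    _ ≤ c⁻¹ * (|c - d| + dist a b) := by
        rw [abs_sub_comm, dist_comm a b]
        gcongr
        exact dist_smul_add_smul_add_le hp d c b a

theorem hausdorffDist_image_smul_add_le {s t : Set X} (hs : IsCompact s) (hs' : s.Nonempty)
    (ht : IsCompact t) (ht' : t.Nonempty) (ht_ball : t ⊆ closedBall 0 1) {c : ℝ} (hc : 0 ≤ c)
    (d : ℝ) (a b : X) :
    hausdorffDist ((fun z => c • z + a) '' s) ((fun z => d • z + b) '' t) ≤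
      c * hausdorffDist s t + (|c - d| + dist a b) := by
  have hs_bdd : IsBounded ((fun z => c • z + a) '' s) := (hs.image (by fun_prop)).isBounded
  have ht_bdd : IsBounded ((fun z => c • z + a) '' t) := (ht.image (by fun_prop)).isBounded
  calc _ ≤ hausdorffDist ((fun z => c • z + a) '' s) ((fun z => c • z + a) '' t) +
        hausdorffDist ((fun z => c • z + a) '' t) ((fun z => d • z + b) '' t) :=
        hausdorffDist_triangle (hausdorffEDist_ne_top_of_nonempty_of_bounded (hs'.image _)
          (ht'.image _) hs_bdd ht_bdd)
    _ ≤ c * hausdorffDist s t + (|c - d| + dist a b) := by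
        gcongr
        · refine hausdorffDist_image_le hc (fun z w => le_of_eq ?_) hs hs' ht ht'
          rw [dist_add_right, dist_smul₀, Real.norm_eq_abs, abs_of_nonneg hc]
        · refine hausdorffDist_image_image_le ht' fun p hp => ?_
          exact dist_smul_add_smul_add_le (mem_closedBall_zero_iff.1 (ht_ball hp)) c d a b

theorem image_smul_add_eq_vadd_smul (c : ℝ) (v : X) (s : Set X) :
    (fun z => c • z + v) '' s = v +ᵥ c • s := by
  rw [← image_smul, ← image_vadd, image_image]
  simp only [vadd_eq_add, add_comm]

theorem diam_image_smul_add (c : ℝ) (v : X) (s : Set X) :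
    diam ((fun z => c • z + v) '' s) = |c| * diam s := by
  rw [image_smul_add_eq_vadd_smul, diam_vadd, diam_smul₀, Real.norm_eq_abs]

theorem smul_add_injective {c : ℝ} (hc : c ≠ 0) (v : X) :
    Function.Injective fun z : X => c • z + v :=
  (add_left_injective v).comp (smul_right_injective X hc)

end NormedSpace

section Extension

variable {X : Type*} [NormedAddCommGroup X] [NormedSpace ℝ X] {n k : ℕ}

/-- The sets of the family `N(X₀(n))`. -/
structure IsNormalized (n : ℕ) (x : Set X) : Prop where
  encard_le : x.encard ≤ n
  diam_eq : diam x = 1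
  zero_mem : (0 : X) ∈ x

theorem IsNormalized.convexHull_subset_closedBall {x : Set X} (hx : IsNormalized n x) :
    convexHull ℝ x ⊆ closedBall 0 1 := by
  refine convexHull_min (fun z hz => ?_) (convex_closedBall 0 1)
  rw [mem_closedBall, ← hx.diam_eq]
  exact dist_le_diam_of_mem (finite_of_encard_le_coe hx.encard_le).isBounded hz hx.zero_mem

def normalizeAt (x : Set X) (a : X) : Set X :=
  (fun z => (diam x)⁻¹ • (z - a)) '' x

theorem normalizeAt_eq_image_smul_add (x : Set X) (a : X) :
    normalizeAt x a = (fun z => (diam x)⁻¹ • z + -((diam x)⁻¹ • a)) '' x := by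
  rw [normalizeAt]
  exact image_congr fun z _ => by module

theorem image_smul_add_normalizeAt {x : Set X} (hx : diam x ≠ 0) (a : X) :
    (fun z => diam x • z + a) '' normalizeAt x a = x := by
  rw [normalizeAt, image_image]
  simp only [smul_inv_smul₀ hx, sub_add_cancel, image_id']

theorem encard_normalizeAt {x : Set X} (hx : diam x ≠ 0) (a : X) :
    (normalizeAt x a).encard = x.encard := by
  rw [normalizeAt_eq_image_smul_add, (smul_add_injective (inv_ne_zero hx) _).encard_image]

theorem isNormalized_normalizeAt {x : Set X} (hx : x.encard ≤ n) (hx' : x.Nontrivial) {a : X}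
    (ha : a ∈ x) : IsNormalized n (normalizeAt x a) := by
  have hδ := diam_pos_of_encard_le hx hx'
  refine ⟨by rwa [encard_normalizeAt hδ.ne'], ?_, ⟨a, ha, by simp⟩⟩
  rw [normalizeAt_eq_image_smul_add, diam_image_smul_add, abs_inv, abs_of_pos hδ,
    inv_mul_cancel₀ hδ.ne']

theorem normalizeAt_eq_image_add (x : Set X) (a b : X) :
    normalizeAt x b = (· + (diam x)⁻¹ • (a - b)) '' normalizeAt x a := by
  rw [normalizeAt, normalizeAt, image_image]
  exact image_congr fun z _ => by module

theorem normalizeAt_image_smul_add (x : Set X) {t : ℝ} (ht : 0 < t) (v a : X) :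
    normalizeAt ((fun z => t • z + v) '' x) (t • a + v) = normalizeAt x a := by
  rw [normalizeAt, diam_image_smul_add, abs_of_pos ht, image_image, normalizeAt]
  refine image_congr fun z _ => ?_
  rw [add_sub_add_right_eq_sub, ← smul_sub, smul_smul, mul_inv_rev, mul_assoc,
    inv_mul_cancel₀ ht.ne', mul_one]

def IsTranslationInvariantOn (n : ℕ) (R : Set X → Set X) : Prop :=
  ∀ x v, IsNormalized n x → IsNormalized n ((· + v) '' x) → R ((· + v) '' x) = (· + v) '' R x

open scoped Classical in
variable (R : Set X → Set X) in
noncomputable def homExtension (x : Set X) : Set X :=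
  if h : x.Nontrivial then
    (fun z => diam x • z + h.nonempty.some) '' R (normalizeAt x h.nonempty.some)
  else x

variable {R : Set X → Set X}

theorem homExtension_of_subsingleton {x : Set X} (hx : x.Subsingleton) : homExtension R x = x :=
  dif_neg (not_nontrivial_iff.2 hx)

theorem homExtension_eq_of_mem (hRtrans : IsTranslationInvariantOn n R)
    {x : Set X} (hx : x.encard ≤ n) (hx' : x.Nontrivial) {a : X} (ha : a ∈ x) :
    homExtension R x = (fun z => diam x • z + a) '' R (normalizeAt x a) := by
  have hδ := (diam_pos_of_encard_le hx hx').ne'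
  rw [homExtension, dif_pos hx']
  set a₀ := hx'.nonempty.some
  have hN₀ := isNormalized_normalizeAt hx hx' hx'.nonempty.some_mem
  rw [normalizeAt_eq_image_add x a a₀] at hN₀ ⊢
  rw [hRtrans _ _ (isNormalized_normalizeAt hx hx' ha) hN₀, image_image]
  refine image_congr fun z _ => ?_
  rw [smul_add, smul_inv_smul₀ hδ]
  abel

theorem homExtension_nonempty
    (hR : ∀ x, IsNormalized n x → (R x).Nonempty ∧ (R x).encard ≤ k)
    {x : Set X} (hx : x.encard ≤ n) (hne : x.Nonempty) : (homExtension R x).Nonempty := by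
  rw [homExtension]
  split_ifs with hx'
  · exact (hR _ (isNormalized_normalizeAt hx hx' hx'.nonempty.some_mem)).1.image _
  · exact hne

theorem homExtension_encard_le
    (hR : ∀ x, IsNormalized n x → (R x).Nonempty ∧ (R x).encard ≤ k) (hk : 1 ≤ k)
    {x : Set X} (hx : x.encard ≤ n) : (homExtension R x).encard ≤ k := by
  rw [homExtension]
  split_ifs with hx'
  · rw [(smul_add_injective (diam_pos_of_encard_le hx hx').ne' _).encard_image]
    exact (hR _ (isNormalized_normalizeAt hx hx' hx'.nonempty.some_mem)).2
  · exact (encard_le_one_iff_subsingleton.2 (not_nontrivial_iff.1 hx')).trans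
      (by exact_mod_cast hk)

theorem homExtension_of_encard_le
    (hRtrans : IsTranslationInvariantOn n R)
    (hRid : ∀ x, IsNormalized n x → x.encard ≤ k → R x = x) (hkn : k ≤ n)
    {x : Set X} (hx : x.encard ≤ k) : homExtension R x = x := by
  rcases x.subsingleton_or_nontrivial with hx' | hx'
  · exact homExtension_of_subsingleton hx'
  have hxn : x.encard ≤ n := hx.trans (by exact_mod_cast hkn)
  have hδ := (diam_pos_of_encard_le hxn hx').ne'
  obtain ⟨a, ha⟩ := hx'.nonempty
  rw [homExtension_eq_of_mem hRtrans hxn hx' ha,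
    hRid _ (isNormalized_normalizeAt hxn hx' ha) (by rwa [encard_normalizeAt hδ]),
    image_smul_add_normalizeAt hδ]

theorem homExtension_subset_convexHull
    (hRtrans : IsTranslationInvariantOn n R)
    (hRconv : ∀ x, IsNormalized n x → R x ⊆ convexHull ℝ x)
    {x : Set X} (hx : x.encard ≤ n) : homExtension R x ⊆ convexHull ℝ x := by
  rcases x.subsingleton_or_nontrivial with hx' | hx'
  · rw [homExtension_of_subsingleton hx']
    exact subset_convexHull ℝ x
  obtain ⟨a, ha⟩ := hx'.nonempty
  rw [homExtension_eq_of_mem hRtrans hx hx' ha]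
  calc _ ⊆ (fun z => diam x • z + a) '' convexHull ℝ (normalizeAt x a) :=
        image_mono (hRconv _ (isNormalized_normalizeAt hx hx' ha))
    _ = convexHull ℝ ((fun z => diam x • z + a) '' normalizeAt x a) := by
        rw [image_smul_add_eq_vadd_smul, image_smul_add_eq_vadd_smul, convexHull_vadd,
          convexHull_smul]
    _ = convexHull ℝ x := by
        rw [image_smul_add_normalizeAt (diam_pos_of_encard_le hx hx').ne']

theorem homExtension_image_smul_add
    (hR : ∀ x, IsNormalized n x → (R x).Nonempty ∧ (R x).encard ≤ k)
    (hRtrans : IsTranslationInvariantOn n R)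
    {x : Set X} (hx : x.encard ≤ n) (hne : x.Nonempty) {t : ℝ} (ht : 0 ≤ t) (v : X) :
    homExtension R ((fun z => t • z + v) '' x) = (fun z => t • z + v) '' homExtension R x := by
  rcases ht.eq_or_lt with rfl | ht
  · simp only [zero_smul, zero_add]
    rw [hne.image_const, (homExtension_nonempty hR hx hne).image_const,
      homExtension_of_subsingleton subsingleton_singleton]
  rcases x.subsingleton_or_nontrivial with hx' | hx'
  · rw [homExtension_of_subsingleton hx', homExtension_of_subsingleton (hx'.image _)]
  have hinj := smul_add_injective ht.ne' v
  obtain ⟨a, ha⟩ := hx'.nonempty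
  rw [homExtension_eq_of_mem hRtrans (by rwa [hinj.encard_image]) (hx'.image hinj)
      (mem_image_of_mem _ ha), homExtension_eq_of_mem hRtrans hx hx' ha,
    normalizeAt_image_smul_add x ht, diam_image_smul_add, abs_of_pos ht, image_image]
  exact image_congr fun z _ => by module

end Extension

section Lipschitz

variable {X : Type*} [NormedAddCommGroup X] [NormedSpace ℝ X] {n k : ℕ}

theorem hausdorffDist_normalizeAt_le {x y : Set X} (hx : IsCompact x) (hy : IsCompact y)
    (hδx : 0 < diam x) (hδy : 0 < diam y) {a b : X} (ha : a ∈ x) (hb : b ∈ y) :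
    hausdorffDist (normalizeAt x a) (normalizeAt y b) ≤
      (diam x)⁻¹ * (hausdorffDist x y + (|diam x - diam y| + dist a b)) := by
  set f := fun z => (diam x)⁻¹ • (z - a)
  have hf : ∀ z w, dist (f z) (f w) = (diam x)⁻¹ * dist z w := fun z w => by
    rw [dist_smul₀, dist_sub_right, Real.norm_eq_abs, abs_of_pos (inv_pos.2 hδx)]
  have hfx : IsBounded (f '' x) := (hx.image (by fun_prop)).isBounded
  have hfy : IsBounded (f '' y) := (hy.image (by fun_prop)).isBounded
  calc hausdorffDist (f '' x) (normalizeAt y b)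
      ≤ hausdorffDist (f '' x) (f '' y) + hausdorffDist (f '' y) (normalizeAt y b) :=
        hausdorffDist_triangle (hausdorffEDist_ne_top_of_nonempty_of_bounded
          ⟨f a, mem_image_of_mem f ha⟩ ⟨f b, mem_image_of_mem f hb⟩ hfx hfy)
    _ ≤ (diam x)⁻¹ * hausdorffDist x y + (diam x)⁻¹ * (|diam x - diam y| + dist a b) := by
        gcongr
        · exact hausdorffDist_image_le (inv_nonneg.2 hδx.le) (fun z w => (hf z w).le)
            hx ⟨a, ha⟩ hy ⟨b, hb⟩
        · refine hausdorffDist_image_image_le ⟨b, hb⟩ fun q hq => ?_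
          refine dist_inv_smul_sub_inv_smul_sub_le hδx hδy ?_
          rw [← dist_eq_norm]
          exact dist_le_diam_of_mem hy.isBounded hq hb
    _ = (diam x)⁻¹ * (hausdorffDist x y + (|diam x - diam y| + dist a b)) := by ring

variable {R : Set X → Set X}

theorem hausdorffDist_homExtension_le_of_nontrivial
    (hR : ∀ x, IsNormalized n x → (R x).Nonempty ∧ (R x).encard ≤ k)
    (hRtrans : IsTranslationInvariantOn n R)
    (hRconv : ∀ x, IsNormalized n x → R x ⊆ convexHull ℝ x)
    {L : ℝ} (hL : 0 ≤ L)
    (hRlip : ∀ x y, IsNormalized n x → IsNormalized n y →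
      hausdorffDist (R x) (R y) ≤ L * hausdorffDist x y)
    {x y : Set X} (hx : x.encard ≤ n) (hx' : x.Nontrivial) (hy : y.encard ≤ n)
    (hy' : y.Nontrivial) :
    hausdorffDist (homExtension R x) (homExtension R y) ≤ (4 * L + 3) * hausdorffDist x y := by
  have hxc := (finite_of_encard_le_coe hx).isCompact
  have hyc := (finite_of_encard_le_coe hy).isCompact
  have hδx := diam_pos_of_encard_le hx hx'
  obtain ⟨a, ha⟩ := hx'.nonempty
  obtain ⟨b, hb, hab⟩ := exists_dist_le_hausdorffDist ha hxc.isBounded hyc hy'.nonempty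
  have hΔ := abs_diam_sub_diam_le hxc hx'.nonempty hyc hy'.nonempty
  have hNx := isNormalized_normalizeAt hx hx' ha
  have hNy := isNormalized_normalizeAt hy hy' hb
  obtain ⟨hRx, hRxk⟩ := hR _ hNx
  obtain ⟨hRy, hRyk⟩ := hR _ hNy
  set h := hausdorffDist x y
  set E := |diam x - diam y| + dist a b
  have hE : E ≤ 3 * h := by linarith
  rw [homExtension_eq_of_mem hRtrans hx hx' ha, homExtension_eq_of_mem hRtrans hy hy' hb]
  calc _ ≤ diam x * hausdorffDist (R (normalizeAt x a)) (R (normalizeAt y b)) + E :=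
        hausdorffDist_image_smul_add_le (finite_of_encard_le_coe hRxk).isCompact hRx
          (finite_of_encard_le_coe hRyk).isCompact hRy
          ((hRconv _ hNy).trans hNy.convexHull_subset_closedBall) hδx.le _ a b
    _ ≤ diam x * (L * ((diam x)⁻¹ * (h + E))) + E := by
        gcongr
        exact (hRlip _ _ hNx hNy).trans (mul_le_mul_of_nonneg_left
          (hausdorffDist_normalizeAt_le hxc hyc hδx (diam_pos_of_encard_le hy hy') ha hb) hL)
    _ = L * (h + E) + E := by field_simp
    _ ≤ (4 * L + 3) * h := by nlinarith

theorem hausdorffDist_singleton_homExtension_le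
    (hR : ∀ x, IsNormalized n x → (R x).Nonempty ∧ (R x).encard ≤ k)
    (hRtrans : IsTranslationInvariantOn n R)
    (hRconv : ∀ x, IsNormalized n x → R x ⊆ convexHull ℝ x)
    (b : X) {x : Set X} (hx : x.encard ≤ n) (hne : x.Nonempty) :
    hausdorffDist {b} (homExtension R x) ≤ hausdorffDist {b} x :=
  hausdorffDist_singleton_le_of_subset_convexHull b (homExtension_nonempty hR hx hne)
    (finite_of_encard_le_coe hx).isCompact (homExtension_subset_convexHull hRtrans hRconv hx)

theorem hausdorffDist_homExtension_le
    (hR : ∀ x, IsNormalized n x → (R x).Nonempty ∧ (R x).encard ≤ k)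
    (hRtrans : IsTranslationInvariantOn n R)
    (hRconv : ∀ x, IsNormalized n x → R x ⊆ convexHull ℝ x)
    {L : ℝ} (hL : 0 ≤ L)
    (hRlip : ∀ x y, IsNormalized n x → IsNormalized n y →
      hausdorffDist (R x) (R y) ≤ L * hausdorffDist x y)
    {x y : Set X} (hx : x.encard ≤ n) (hxne : x.Nonempty) (hy : y.encard ≤ n)
    (hyne : y.Nonempty) :
    hausdorffDist (homExtension R x) (homExtension R y) ≤ (4 * L + 3) * hausdorffDist x y := by
  have hC : 1 ≤ 4 * L + 3 := by linarith
  rcases x.subsingleton_or_nontrivial with hx' | hx'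
  · obtain ⟨a, rfl⟩ : ∃ a, x = {a} := ⟨_, hx'.eq_singleton_of_mem hxne.some_mem⟩
    rw [homExtension_of_subsingleton hx']
    exact (hausdorffDist_singleton_homExtension_le hR hRtrans hRconv a hy hyne).trans
      (le_mul_of_one_le_left hausdorffDist_nonneg hC)
  rcases y.subsingleton_or_nontrivial with hy' | hy'
  · obtain ⟨b, rfl⟩ : ∃ b, y = {b} := ⟨_, hy'.eq_singleton_of_mem hyne.some_mem⟩
    rw [homExtension_of_subsingleton hy', hausdorffDist_comm, hausdorffDist_comm (s := x)]
    exact (hausdorffDist_singleton_homExtension_le hR hRtrans hRconv b hx hxne).trans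
      (le_mul_of_one_le_left hausdorffDist_nonneg hC)
  exact hausdorffDist_homExtension_le_of_nontrivial hR hRtrans hRconv hL hRlip hx hx' hy hy'

end Lipschitz

theorem stmt_3_general {X : Type*} [NormedAddCommGroup X] [NormedSpace ℝ X]
    (n k : ℕ) (hk1 : 1 ≤ k) (hkn : k ≤ n - 1)
    (L : ℝ) (hL : 0 ≤ L)
    (R : Set X → Set X)
    -- R maps N(X₀(n)) into nonempty sets of at most k elements
    (hR0 : ∀ x : Set X, x.encard ≤ n → Metric.diam x = 1 → (0 : X) ∈ x →
      (R x).Nonempty ∧ (R x).encard ≤ k)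
    -- (a) R is L-Lipschitz on N(X₀(n))
    (hRlip : ∀ x y : Set X, x.encard ≤ n → Metric.diam x = 1 → (0 : X) ∈ x →
      y.encard ≤ n → Metric.diam y = 1 → (0 : X) ∈ y →
      Metric.hausdorffDist (R x) (R y) ≤ L * Metric.hausdorffDist x y)
    -- (b) R is translation-invariant within N(X₀(n))
    (hRtrans : ∀ (x : Set X) (v : X), x.encard ≤ n → Metric.diam x = 1 → (0 : X) ∈ x →
      ((fun a => a + v) '' x).encard ≤ n → Metric.diam ((fun a => a + v) '' x) = 1 →
      (0 : X) ∈ (fun a => a + v) '' x →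
      R ((fun a => a + v) '' x) = (fun a => a + v) '' R x)
    -- (c) R(x) ⊆ conv(x)
    (hRconv : ∀ x : Set X, x.encard ≤ n → Metric.diam x = 1 → (0 : X) ∈ x →
      R x ⊆ convexHull ℝ x)
    -- (d) R fixes sets of at most k elements
    (hRid : ∀ x : Set X, x.encard ≤ n → Metric.diam x = 1 → (0 : X) ∈ x →
      x.encard ≤ k → R x = x) :
    ∃ r : Set X → Set X,
      (∀ x : Set X, x.Nonempty → x.encard ≤ n → (r x).Nonempty ∧ (r x).encard ≤ k) ∧
      (∀ x : Set X, x.Nonempty → x.encard ≤ k → r x = x) ∧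
      (∀ (x : Set X) (t : ℝ) (v : X), x.Nonempty → x.encard ≤ n → 0 ≤ t →
        r ((fun a => t • a + v) '' x) = (fun a => t • a + v) '' r x) ∧
      (∀ x y : Set X, x.Nonempty → x.encard ≤ n → y.Nonempty → y.encard ≤ n →
        Metric.hausdorffDist (r x) (r y) ≤ (6 * L + 5) * Metric.hausdorffDist x y) := by
  have hR (x) (hx : IsNormalized n x) := hR0 x hx.encard_le hx.diam_eq hx.zero_mem
  have hRconv' (x) (hx : IsNormalized n x) := hRconv x hx.encard_le hx.diam_eq hx.zero_mem
  have hRid' (x) (hx : IsNormalized n x) := hRid x hx.encard_le hx.diam_eq hx.zero_mem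
  have hRlip' (x y) (hx : IsNormalized n x) (hy : IsNormalized n y) :=
    hRlip x y hx.encard_le hx.diam_eq hx.zero_mem hy.encard_le hy.diam_eq hy.zero_mem
  have hRtrans' : IsTranslationInvariantOn n R := fun x v hx hxv =>
    hRtrans x v hx.encard_le hx.diam_eq hx.zero_mem hxv.encard_le hxv.diam_eq hxv.zero_mem
  refine ⟨homExtension R,
    fun x hne hx => ⟨homExtension_nonempty hR hx hne, homExtension_encard_le hR hk1 hx⟩,
    fun x _ hx => homExtension_of_encard_le hRtrans' hRid' (hkn.trans (Nat.sub_le n 1)) hx,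
    fun x t v hne hx ht => homExtension_image_smul_add hR hRtrans' hx hne ht v,
    fun x y hxne hx hyne hy => ?_⟩
  calc _ ≤ (4 * L + 3) * hausdorffDist x y :=
        hausdorffDist_homExtension_le hR hRtrans' hRconv' hL hRlip' hx hxne hy hyne
    _ ≤ (6 * L + 5) * hausdorffDist x y :=
        mul_le_mul_of_nonneg_right (by linarith) hausdorffDist_nonneg

/-- Homogeneous Lipschitz extension: a translation-invariant Lipschitz map
`R : N(X₀(n)) → X(k)` with `R(x) ⊆ conv(x)` fixing `X(k)` extends to an affine
Lipschitz retraction `r : X(n) → X(k)` with `Lip(r) = 6 Lip(R) + 5`. -/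
theorem stmt_3 {X : Type*} [NormedAddCommGroup X] [NormedSpace ℝ X]
    (n k : ℕ) (hn : 2 ≤ n) (hk1 : 1 ≤ k) (hkn : k ≤ n - 1)
    (L : ℝ) (hL : 0 ≤ L)
    (R : Set X → Set X)
    -- R maps N(X₀(n)) into nonempty sets of at most k elements
    (hR0 : ∀ x : Set X, x.encard ≤ n → Metric.diam x = 1 → (0 : X) ∈ x →
      (R x).Nonempty ∧ (R x).encard ≤ k)
    -- (a) R is L-Lipschitz on N(X₀(n))
    (hRlip : ∀ x y : Set X, x.encard ≤ n → Metric.diam x = 1 → (0 : X) ∈ x →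
      y.encard ≤ n → Metric.diam y = 1 → (0 : X) ∈ y →
      Metric.hausdorffDist (R x) (R y) ≤ L * Metric.hausdorffDist x y)
    -- (b) R is translation-invariant within N(X₀(n))
    (hRtrans : ∀ (x : Set X) (v : X), x.encard ≤ n → Metric.diam x = 1 → (0 : X) ∈ x →
      ((fun a => a + v) '' x).encard ≤ n → Metric.diam ((fun a => a + v) '' x) = 1 →
      (0 : X) ∈ (fun a => a + v) '' x →
      R ((fun a => a + v) '' x) = (fun a => a + v) '' R x)
    -- (c) R(x) ⊆ conv(x)
    (hRconv : ∀ x : Set X, x.encard ≤ n → Metric.diam x = 1 → (0 : X) ∈ x →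
      R x ⊆ convexHull ℝ x)
    -- (d) R fixes sets of at most k elements
    (hRid : ∀ x : Set X, x.encard ≤ n → Metric.diam x = 1 → (0 : X) ∈ x →
      x.encard ≤ k → R x = x) :
    ∃ r : Set X → Set X,
      (∀ x : Set X, x.Nonempty → x.encard ≤ n → (r x).Nonempty ∧ (r x).encard ≤ k) ∧
      (∀ x : Set X, x.Nonempty → x.encard ≤ k → r x = x) ∧
      (∀ (x : Set X) (t : ℝ) (v : X), x.Nonempty → x.encard ≤ n → 0 ≤ t →
        r ((fun a => t • a + v) '' x) = (fun a => t • a + v) '' r x) ∧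
      (∀ x y : Set X, x.Nonempty → x.encard ≤ n → y.Nonempty → y.encard ≤ n →
        Metric.hausdorffDist (r x) (r y) ≤ (6 * L + 5) * Metric.hausdorffDist x y) :=
  stmt_3_general n k hk1 hkn L hL R hR0 hRlip hRtrans hRconv hRid
end

section
/- Let X be a real normed space. There exists a map r from the collection of nonempty subsets of X with at most 2 elements to X such that r({a}) = a for every a ∈ X and ‖r(x) − r(y)‖ ≤ d_H(x, y) for all nonempty x, y ⊆ X with at most 2 elements; i.e., there exists a 1-Lipschitz retraction X(2) → X. (One such map sends each set to the average of its elements.) -/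
/-!
Send a set to the average of its elements, so that `{a, b}` goes to the midpoint of `a` and `b`.
If `d_H({a, b}, {c, d}) ≤ D`, then every point of each pair lies within `D` of a point of the
other pair, and in the bipartite graph `K_{2,2}` this forces a matching, say `a ↔ c`, `b ↔ d`.
Then `‖(a + b)/2 - (c + d)/2‖ ≤ (‖a - c‖ + ‖b - d‖)/2 ≤ D`.
-/

open Metric

namespace Set

variable {α : Type*}

theorem exists_eq_pair_of_encard_le_two {s : Set α} (hne : s.Nonempty) (hs : s.encard ≤ 2) :
    ∃ a b, s = {a, b} := by
  rcases hs.lt_or_eq with hlt | htwo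
  · obtain rfl | ⟨a, rfl⟩ := encard_le_one_iff_eq.mp (Order.le_of_lt_succ hlt)
    · exact absurd hne not_nonempty_empty
    · exact ⟨a, a, pair_eq_singleton a |>.symm⟩
  · obtain ⟨a, b, -, rfl⟩ := encard_eq_two.mp htwo
    exact ⟨a, b, rfl⟩

variable {V : Type*} [AddCommGroup V] [Module ℝ V]

/-- `ncard` and `finsum` vanish on infinite sets, so the value there is `0`. -/
noncomputable def average (s : Set V) : V :=
  (s.ncard : ℝ)⁻¹ • ∑ᶠ x ∈ s, x

theorem average_singleton (a : V) : ({a} : Set V).average = a := by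
  simp [average]

theorem average_pair (a b : V) : ({a, b} : Set V).average = midpoint ℝ a b := by
  rcases eq_or_ne a b with rfl | hab
  · rw [pair_eq_singleton, average_singleton, midpoint_self]
  · rw [average, ncard_pair hab, finsum_mem_pair hab, midpoint_eq_smul_add, invOf_eq_inv]
    norm_num

end Set

section PseudoMetricSpace

variable {α : Type*} [PseudoMetricSpace α]

theorem Metric.infDist_pair (x c d : α) : infDist x {c, d} = min (dist x c) (dist x d) := by
  rw [infDist, Set.insert_eq, infEDist_union, infEDist_singleton, infEDist_singleton,
    ENNReal.toReal_min (edist_ne_top x c) (edist_ne_top x d), ← dist_edist, ← dist_edist]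

theorem Metric.hausdorffEDist_pair_ne_top (a b c d : α) :
    hausdorffEDist ({a, b} : Set α) {c, d} ≠ ⊤ :=
  hausdorffEDist_ne_top_of_nonempty_of_bounded (Set.insert_nonempty a {b})
    (Set.insert_nonempty c {d}) (Set.toFinite _).isBounded (Set.toFinite _).isBounded

theorem Metric.pair_matching_le_hausdorffDist (a b c d : α) :
    let D := hausdorffDist ({a, b} : Set α) {c, d}
    (dist a c ≤ D ∧ dist b d ≤ D) ∨ (dist a d ≤ D ∧ dist b c ≤ D) := by
  intro D
  have hfin := hausdorffEDist_pair_ne_top a b c d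
  have hfin' := hausdorffEDist_pair_ne_top c d a b
  have near_cd (x : α) (hx : x ∈ ({a, b} : Set α)) : min (dist x c) (dist x d) ≤ D :=
    infDist_pair x c d ▸ infDist_le_hausdorffDist_of_mem hx hfin
  have near_ab (y : α) (hy : y ∈ ({c, d} : Set α)) : min (dist a y) (dist b y) ≤ D := by
    rw [dist_comm a, dist_comm b, ← infDist_pair]
    exact (infDist_le_hausdorffDist_of_mem hy hfin').trans_eq hausdorffDist_comm
  -- In `K_{2,2}`, any choice of one edge at each vertex contains a perfect matching.
  rcases min_le_iff.mp (near_cd a (by simp)) with _ | _ <;>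
  rcases min_le_iff.mp (near_cd b (by simp)) with _ | _ <;>
  rcases min_le_iff.mp (near_ab c (by simp)) with _ | _ <;>
  rcases min_le_iff.mp (near_ab d (by simp)) with _ | _ <;>
  tauto

end PseudoMetricSpace

theorem dist_midpoint_midpoint_le_hausdorffDist {V : Type*} [SeminormedAddCommGroup V]
    [NormedSpace ℝ V] (a b c d : V) :
    dist (midpoint ℝ a b) (midpoint ℝ c d) ≤ hausdorffDist ({a, b} : Set V) {c, d} := by
  rcases pair_matching_le_hausdorffDist a b c d with ⟨hac, hbd⟩ | ⟨had, hbc⟩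
  · linarith [dist_midpoint_midpoint_le a b c d]
  · rw [midpoint_comm c d]
    linarith [dist_midpoint_midpoint_le a b d c]

/-- There exists a `1`-Lipschitz retraction `X(2) → X` for any normed space `X`. -/
theorem stmt_4 {X : Type*} [NormedAddCommGroup X] [NormedSpace ℝ X] :
    ∃ r : Set X → X,
      (∀ a : X, r {a} = a) ∧
      (∀ x y : Set X, x.Nonempty → x.encard ≤ 2 → y.Nonempty → y.encard ≤ 2 →
        ‖r x - r y‖ ≤ Metric.hausdorffDist x y) := by
  refine ⟨Set.average, Set.average_singleton, fun x y hx hx2 hy hy2 => ?_⟩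
  obtain ⟨a, b, rfl⟩ := Set.exists_eq_pair_of_encard_le_two hx hx2
  obtain ⟨c, d, rfl⟩ := Set.exists_eq_pair_of_encard_le_two hy hy2
  rw [Set.average_pair, Set.average_pair, ← dist_eq_norm]
  exact dist_midpoint_midpoint_le_hausdorffDist a b c d
end

section
/- Let X be a metric space, let φ : X → ℝ be Lipschitz with constant Λ, and let (a₁,b₁), …, (a_N,b_N) be open intervals with a_k < a_{k+1} < b_k < b_{k+1} for 1 ≤ k ≤ N−1 and whose union is all of ℝ. Let E ⊆ X, D ≥ 0, and let g : E → X satisfy dist(x, g(x)) ≤ D for all x ∈ E. Suppose that for each k, g is Lipschitz with constant L_k on E_k := {x ∈ E : a_k < φ(x) < b_k}. Set ε := min over 1 ≤ k ≤ N−1 of (b_k − a_{k+1}). Then for all x, y ∈ E, dist(g(x), g(y)) ≤ max( max_k L_k , 1 + 2DΛ/ε )·dist(x, y). -/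
lemma ereal_sub_pos {u v : EReal} (h : u < v) : 0 < v - u := by
  induction u using EReal.rec with
  | bot =>
    rw [EReal.sub_bot (ne_bot_of_gt h)]
    exact lt_of_lt_of_le (show (0:EReal) < 1 from by norm_num) le_top
  | coe u =>
    induction v using EReal.rec with
    | bot => exact absurd h (by simp)
    | coe v =>
      rw [← EReal.coe_sub]
      exact_mod_cast sub_pos.2 (EReal.coe_lt_coe_iff.1 h)
    | top =>
      rw [EReal.top_sub_coe]
      exact lt_of_lt_of_le (show (0:EReal) < 1 from by norm_num) le_top
  | top => exact absurd h (by simp [lt_irrefl])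

/-- Gluing with strips: if `g : E → X` displaces points at most `D`, and is Lipschitz
with constant `L k` on each strip `E_k = {x ∈ E : a k < φ x < b k}`, where the open
intervals `(a k, b k)` (for `1 ≤ k ≤ N`) form an increasingly ordered cover of `ℝ`,
then `g` is Lipschitz on `E` with constant `max (max_k L_k) (1 + 2DΛ/ε)`, where
`ε = min_{1 ≤ k ≤ N-1} (b k - a (k+1))`. -/
theorem stmt_6 {X : Type*} [MetricSpace X]
    (φ : X → ℝ) (Λ : ℝ) (hΛ : 0 ≤ Λ)
    (hφ : ∀ x y : X, |φ x - φ y| ≤ Λ * dist x y)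
    (N : ℕ) (hN : 1 ≤ N) (a b : ℕ → EReal)
    (hchain : ∀ k, 1 ≤ k → k < N →
      a k < a (k + 1) ∧ a (k + 1) < b k ∧ b k < b (k + 1))
    (hcover : ∀ t : ℝ, ∃ k, 1 ≤ k ∧ k ≤ N ∧ a k < (t : EReal) ∧ (t : EReal) < b k)
    (E : Set X) (D : ℝ) (hD : 0 ≤ D)
    (g : X → X) (hg : ∀ x ∈ E, dist x (g x) ≤ D)
    (L : ℕ → ℝ)
    (hLip : ∀ k, 1 ≤ k → k ≤ N → ∀ x ∈ E, ∀ y ∈ E,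
      a k < (φ x : EReal) → (φ x : EReal) < b k →
      a k < (φ y : EReal) → (φ y : EReal) < b k →
      dist (g x) (g y) ≤ L k * dist x y) :
    ∀ x ∈ E, ∀ y ∈ E,
      dist (g x) (g y) ≤
        max ((Finset.Icc 1 N).sup' (Finset.nonempty_Icc.2 hN) L)
            (1 + 2 * D * Λ /
              (((Finset.Icc 1 (N - 1)).inf fun k => b k - a (k + 1)).toReal)) *
          dist x y := by
  classical
  set Lmax := (Finset.Icc 1 N).sup' (Finset.nonempty_Icc.2 hN) L with hLmax
  set εE := (Finset.Icc 1 (N - 1)).inf fun k => b k - a (k + 1) with hεE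
  set K := max Lmax (1 + 2 * D * Λ / εE.toReal) with hK
  -- monotonicity of b on [1, N]
  have bmono : ∀ j k : ℕ, 1 ≤ k → k ≤ j → j ≤ N → b k ≤ b j := by
    intro j
    induction j with
    | zero => intro k h1 h2 h3; omega
    | succ n ih =>
      intro k h1 h2 h3
      rcases Nat.lt_or_ge k (n+1) with h | h
      · have hn1 : 1 ≤ n := by omega
        calc b k ≤ b n := ih k h1 (by omega) (by omega)
          _ ≤ b (n+1) := le_of_lt (hchain n hn1 (by omega)).2.2
      · have : k = n + 1 := by omega
        subst this; exact le_rfl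
  have key : ∀ x ∈ E, ∀ y ∈ E, φ x ≤ φ y → dist (g x) (g y) ≤ K * dist x y := by
    intro x hx y hy hxy
    by_cases hsame : ∃ k, 1 ≤ k ∧ k ≤ N ∧ a k < (φ x : EReal) ∧ (φ x : EReal) < b k ∧
        a k < (φ y : EReal) ∧ (φ y : EReal) < b k
    · obtain ⟨k, h1, h2, h3, h4, h5, h6⟩ := hsame
      have hLk : L k ≤ Lmax := Finset.le_sup' L (Finset.mem_Icc.2 ⟨h1, h2⟩)
      calc dist (g x) (g y) ≤ L k * dist x y := hLip k h1 h2 x hx y hy h3 h4 h5 h6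
        _ ≤ K * dist x y := by
            apply mul_le_mul_of_nonneg_right _ dist_nonneg
            exact le_trans hLk (le_max_left _ _)
    · -- far case
      -- maximal strip containing φ x
      set S := (Finset.Icc 1 N).filter
        (fun k => a k < (φ x : EReal) ∧ (φ x : EReal) < b k) with hS
      have hSne : S.Nonempty := by
        obtain ⟨k, h1, h2, h3, h4⟩ := hcover (φ x)
        exact ⟨k, Finset.mem_filter.2 ⟨Finset.mem_Icc.2 ⟨h1, h2⟩, h3, h4⟩⟩
      set j := S.max' hSne with hj
      obtain ⟨hjIcc, hjax, hjxb⟩ := Finset.mem_filter.1 (S.max'_mem hSne)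
      obtain ⟨hj1, hjN⟩ := Finset.mem_Icc.1 hjIcc
      -- y is above the strip j
      have hyb : b j ≤ (φ y : EReal) := by
        by_contra h
        push_neg at h
        exact hsame ⟨j, hj1, hjN, hjax, hjxb,
          lt_of_lt_of_le hjax (EReal.coe_le_coe_iff.2 hxy), h⟩
      -- j < N
      have hjltN : j < N := by
        rcases lt_or_eq_of_le hjN with h | h
        · exact h
        · exfalso
          obtain ⟨m, hm1, hm2, hm3, hm4⟩ := hcover (φ y)
          exact absurd (lt_of_le_of_lt (le_trans (bmono j m hm1 (by omega) hjN) hyb) hm4)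
            (lt_irrefl _)
      -- x is below a (j+1)
      have hxa : (φ x : EReal) ≤ a (j + 1) := by
        by_contra h
        push_neg at h
        have hmem : j + 1 ∈ S := Finset.mem_filter.2 ⟨Finset.mem_Icc.2 ⟨by omega, by omega⟩,
          h, lt_trans hjxb (hchain j hj1 hjltN).2.2⟩
        have := S.le_max' (j+1) hmem
        omega
      -- ε estimates
      have hjmem : j ∈ Finset.Icc 1 (N - 1) := Finset.mem_Icc.2 ⟨hj1, by omega⟩
      have hεle : εE ≤ b j - a (j + 1) := by
        rw [hεE]; exact Finset.inf_le hjmem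
      have hdiff : b j - a (j + 1) ≤ ((φ y - φ x : ℝ) : EReal) := by
        rw [EReal.coe_sub]
        exact EReal.sub_le_sub hyb hxa
      have hεpos : (0 : EReal) < εE := by
        rw [hεE]
        rw [Finset.lt_inf_iff (by norm_num : (0:EReal) < ⊤)]
        intro k hk
        obtain ⟨hk1, hk2⟩ := Finset.mem_Icc.1 hk
        exact ereal_sub_pos (hchain k hk1 (by omega)).2.1
      have hεne_top : εE ≠ ⊤ :=
        ne_top_of_le_ne_top (EReal.coe_ne_top _) (le_trans hεle hdiff)
      have hεne_bot : εE ≠ ⊥ := ne_bot_of_gt hεpos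
      have hεr_pos : 0 < εE.toReal := by
        have h0 : ((0:ℝ) : EReal) < ((εE.toReal : ℝ) : EReal) := by
          rw [EReal.coe_toReal hεne_top hεne_bot]; exact_mod_cast hεpos
        exact_mod_cast h0
      have hεr_le : εE.toReal ≤ φ y - φ x := by
        have := EReal.toReal_le_toReal (le_trans hεle hdiff) hεne_bot (EReal.coe_ne_top _)
        rwa [EReal.toReal_coe] at this
      -- Lipschitz bound on φ gives lower bound on dist x y
      have hφd : φ y - φ x ≤ Λ * dist x y := by
        have := hφ y x
        rw [dist_comm] at this
        calc φ y - φ x ≤ |φ y - φ x| := le_abs_self _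
          _ ≤ Λ * dist x y := this
      have hΛd : εE.toReal ≤ Λ * dist x y := le_trans hεr_le hφd
      have h2D : 2 * D ≤ 2 * D * Λ / εE.toReal * dist x y := by
        rw [div_mul_eq_mul_div, le_div_iff₀ hεr_pos]
        calc 2 * D * εE.toReal ≤ 2 * D * (Λ * dist x y) := by
              apply mul_le_mul_of_nonneg_left hΛd (by linarith)
          _ = 2 * D * Λ * dist x y := by ring
      calc dist (g x) (g y) ≤ dist (g x) x + dist x y + dist y (g y) := by
            have := dist_triangle4 (g x) x y (g y); linarith
        _ ≤ D + dist x y + D := by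
            have h1 := hg x hx
            have h2 := hg y hy
            rw [dist_comm (g x) x]
            linarith
        _ = 2 * D + dist x y := by ring
        _ ≤ 2 * D * Λ / εE.toReal * dist x y + dist x y := by linarith
        _ = (1 + 2 * D * Λ / εE.toReal) * dist x y := by ring
        _ ≤ K * dist x y := mul_le_mul_of_nonneg_right (le_max_right _ _) dist_nonneg
  intro x hx y hy
  rcases le_total (φ x) (φ y) with h | h
  · exact key x hx y hy h
  · rw [dist_comm (g x), dist_comm x]
    exact key y hy x hx h
end

section
/- Let X be a real normed space. There exists a map r from the collection of nonempty subsets of X with at most 3 elements to the collection of nonempty subsets of X with at most 2 elements such that r(x) = x whenever x has at most 2 elements, and d_H(r(x), r(y)) ≤ 731·d_H(x, y) for all nonempty x, y ⊆ X with at most 3 elements; i.e., there is a Lipschitz retraction X(3) → X(2) with Lipschitz constant 731. -/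
/-!
Write a triple with shortest side `ab`, centroid `G` and `m` the midpoint of `ab`; it is sent to
`{G + t (m - G), G + t (c - G)}`, where `t ∈ [0, 1]` is the clamped ratio
`2 (min(ac, bc) - ab) / max(ac, bc)`. So `t = 1` when `ab` is small compared with the other sides
(the image is `{m, c}`, and a pair `{u, v}` read as `(u, u, v)` is fixed), while `t = 0` exactly
when the two shortest sides are equal, i.e. when the labelling is ambiguous, and then the image
collapses to `G`.

Let `d = d_H(x, y)`. If `diam x ≤ 26 d`, both images lie in the convex hulls of `x` and `y`, so
they are within `diam x + d + diam y` of each other. If `x` has a side of length `≤ 2 d`, then so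
does `y`, both factors are `1`, and both images are within a few `d` of `x` and `y`. Otherwise the
points of `x` are more than `2 d` apart, so nearest points match `x` bijectively with `y`. If the
matching respects the labelling, `G`, `m`, `c` and `t · diam x` all move by `O(d)`; if it does not,
the two shortest sides of each triple differ by `O(d)`, so both images lie within `O(d)` of
centroids that are `d`-close.
-/

open Metric Set AffineMap Bornology

namespace FiniteSubsetRetraction

section Sets

variable {α : Type*}

theorem eq_perm_of_mem_triple {a b c p q r : α} (hp : p ∈ ({a, b, c} : Set α))
    (hq : q ∈ ({a, b, c} : Set α)) (hr : r ∈ ({a, b, c} : Set α))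
    (hpq : p ≠ q) (hpr : p ≠ r) (hqr : q ≠ r) :
    (a = p ∧ b = q ∧ c = r) ∨ (a = q ∧ b = p ∧ c = r) ∨ (a = q ∧ b = r ∧ c = p) ∨
      (a = r ∧ b = q ∧ c = p) ∨ (a = p ∧ b = r ∧ c = q) ∨ (a = r ∧ b = p ∧ c = q) := by
  simp only [mem_insert_iff, mem_singleton_iff] at hp hq hr
  grind

theorem encard_le_two_of_le_three {x : Set α} (h3 : x.encard ≤ 3) (h : x.encard ≠ 3) :
    x.encard ≤ 2 :=
  (ENat.lt_add_one_iff (by decide)).1 (h3.lt_of_ne h)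

theorem exists_eq_pair_of_encard_le_two {x : Set α} (hne : x.Nonempty) (h2 : x.encard ≤ 2) :
    ∃ u v, x = {u, v} := by
  rcases h2.lt_or_eq with h | h
  · obtain h0 | ⟨u, rfl⟩ := encard_le_one_iff_eq.1 ((ENat.lt_add_one_iff (by decide)).1 h)
    · exact absurd h0 hne.ne_empty
    · exact ⟨u, u, pair_eq_singleton u |>.symm⟩
  · obtain ⟨u, v, -, rfl⟩ := encard_eq_two.1 h
    exact ⟨u, v, rfl⟩

end Sets

section PseudoMetric

variable {α : Type*} [PseudoMetricSpace α]

def IsShortestSide (a b c : α) : Prop := dist a b ≤ dist a c ∧ dist a b ≤ dist b c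

theorem IsShortestSide.swap {a b c : α} (h : IsShortestSide a b c) : IsShortestSide b a c := by
  rw [IsShortestSide, dist_comm b a]
  exact ⟨h.2, h.1⟩

theorem isShortestSide_self_left (u v : α) : IsShortestSide u u v := by
  simp [IsShortestSide]

theorem IsShortestSide.diam_eq {a b c : α} (h : IsShortestSide a b c) :
    diam ({a, b, c} : Set α) = max (dist a c) (dist b c) := by
  rw [diam_triple, max_eq_right h.1]

theorem exists_isShortestSide (u v w : α) :
    ∃ a b c, IsShortestSide a b c ∧ ({a, b, c} : Set α) = {u, v, w} := by
  by_cases huv : dist u v ≤ dist u w ∧ dist u v ≤ dist v w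
  · exact ⟨u, v, w, huv, rfl⟩
  rw [not_and_or, not_le, not_le] at huv
  by_cases huw : dist u w ≤ dist v w
  · refine ⟨u, w, v, ⟨?_, by rwa [dist_comm w v]⟩, by rw [pair_comm]⟩
    rcases huv with huv | huv <;> linarith
  · refine ⟨v, w, u, ⟨?_, ?_⟩, by rw [pair_comm w u, insert_comm v u]⟩
    · rw [dist_comm v u]
      rcases huv with huv | huv <;> linarith
    · rw [dist_comm w u]
      linarith

theorem exists_isShortestSide_of_encard_eq_three {x : Set α} (h : x.encard = 3) :
    ∃ p : α × α × α, IsShortestSide p.1 p.2.1 p.2.2 ∧ x = {p.1, p.2.1, p.2.2} := by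
  obtain ⟨u, v, w, -, -, -, rfl⟩ := encard_eq_three.1 h
  obtain ⟨a, b, c, habc, hset⟩ := exists_isShortestSide u v w
  exact ⟨(a, b, c), habc, hset.symm⟩

theorem IsShortestSide.dist_le_of_near_pair {p q r a c : α} {R : ℝ} (h : IsShortestSide p q r)
    (hnear : ∀ v ∈ ({p, q, r} : Set α), dist v a ≤ R ∨ dist v c ≤ R) : dist p q ≤ 2 * R := by
  have close : ∀ x y z : α, dist x z ≤ R → dist y z ≤ R → dist x y ≤ 2 * R := fun x y z hx hy ↦
    (dist_triangle_right x y z).trans (by linarith)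
  obtain ⟨hpr, hqr⟩ := h
  rcases hnear p (by simp) with hp | hp <;> rcases hnear q (by simp) with hq | hq <;>
    rcases hnear r (by simp) with hr | hr <;>
    first
    | exact close _ _ _ hp hq
    | linarith [close _ _ _ hp hr]
    | linarith [close _ _ _ hq hr]

theorem abs_dist_sub_dist_le {u v u' v' : α} {d : ℝ} (hu : dist u u' ≤ d) (hv : dist v v' ≤ d) :
    |dist u v - dist u' v'| ≤ 2 * d := by
  have := dist_dist_dist_le u v u' v'
  rw [Real.dist_eq] at this
  linarith

theorem hausdorffDist_pair_le {u v u' v' : α} {e : ℝ} (hu : dist u u' ≤ e) (hv : dist v v' ≤ e) :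
    hausdorffDist ({u, v} : Set α) {u', v'} ≤ e := by
  refine hausdorffDist_le_of_mem_dist (dist_nonneg.trans hu) ?_ ?_
  · rintro z (rfl | rfl)
    exacts [⟨u', by simp, hu⟩, ⟨v', by simp, hv⟩]
  · rintro z (rfl | rfl)
    exacts [⟨u, by simp, by rwa [dist_comm]⟩, ⟨v, by simp, by rwa [dist_comm]⟩]

theorem hausdorffDist_le_of_subset_closedBall {s t : Set α} {p q : α} {r r' : ℝ}
    (hs : s.Nonempty) (ht : t.Nonempty) (hsp : s ⊆ closedBall p r) (htq : t ⊆ closedBall q r') :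
    hausdorffDist s t ≤ r + dist p q + r' := by
  obtain ⟨x, hx⟩ := hs
  obtain ⟨y, hy⟩ := ht
  have hxp := mem_closedBall.1 (hsp hx)
  have hyq := mem_closedBall.1 (htq hy)
  refine hausdorffDist_le_of_mem_dist ?_ (fun z hz ↦ ⟨y, hy, ?_⟩) (fun z hz ↦ ⟨x, hx, ?_⟩)
  · linarith [dist_nonneg (x := x) (y := p), dist_nonneg (x := y) (y := q),
      dist_nonneg (x := p) (y := q)]
  · linarith [dist_triangle4 z p q y, mem_closedBall.1 (hsp hz), dist_comm y q]
  · linarith [dist_triangle4 z q p x, mem_closedBall.1 (htq hz), dist_comm x p, dist_comm p q]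

theorem hausdorffDist_le_add_add {s t u v : Set α} (hs : IsBounded s) (ht : IsBounded t)
    (hu : IsBounded u) (hs₀ : s.Nonempty) (ht₀ : t.Nonempty) (hu₀ : u.Nonempty) :
    hausdorffDist s v ≤ hausdorffDist s t + hausdorffDist t u + hausdorffDist u v := by
  calc _ ≤ hausdorffDist s t + hausdorffDist t v :=
        hausdorffDist_triangle (hausdorffEDist_ne_top_of_nonempty_of_bounded hs₀ ht₀ hs ht)
    _ ≤ hausdorffDist s t + (hausdorffDist t u + hausdorffDist u v) := by
        gcongr
        exact hausdorffDist_triangle (hausdorffEDist_ne_top_of_nonempty_of_bounded ht₀ hu₀ ht hu)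
    _ = _ := (add_assoc _ _ _).symm

theorem exists_dist_le_hausdorffDist {s t : Set α} (hs : IsBounded s) (ht : IsCompact t)
    (hs₀ : s.Nonempty) (ht₀ : t.Nonempty) {u : α} (hu : u ∈ s) :
    ∃ v ∈ t, dist u v ≤ hausdorffDist s t := by
  obtain ⟨v, hv, huv⟩ := ht.exists_infDist_eq_dist ht₀ u
  refine ⟨v, hv, huv ▸ infDist_le_hausdorffDist_of_mem hu ?_⟩
  exact hausdorffEDist_ne_top_of_nonempty_of_bounded hs₀ ht₀ hs ht.isBounded

theorem diam_le_diam_add_two_mul {s t : Set α} {d : ℝ} (hs : IsBounded s) (hd : 0 ≤ d)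
    (h : ∀ v ∈ t, ∃ u ∈ s, dist v u ≤ d) : diam t ≤ diam s + 2 * d := by
  refine diam_le_of_forall_dist_le (by positivity) fun v hv w hw ↦ ?_
  obtain ⟨u, hu, hvu⟩ := h v hv
  obtain ⟨u', hu', hwu'⟩ := h w hw
  linarith [dist_triangle4 v u u' w, dist_le_diam_of_mem hs hu hu', dist_comm w u']

noncomputable def shrinkFactor (a b c : α) : ℝ :=
  projIcc (0 : ℝ) 1 zero_le_one
    ((2 * min (dist a c) (dist b c) - 2 * dist a b) / max (dist a c) (dist b c))

theorem shrinkFactor_mem_Icc (a b c : α) : shrinkFactor a b c ∈ Icc (0 : ℝ) 1 :=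
  Subtype.prop _

theorem shrinkFactor_comm (a b c : α) : shrinkFactor a b c = shrinkFactor b a c := by
  simp only [shrinkFactor, dist_comm b a, min_comm (dist a c), max_comm (dist a c)]

theorem shrinkFactor_eq_one {a b c : α} (hl : 0 < max (dist a c) (dist b c))
    (h : 4 * dist a b ≤ max (dist a c) (dist b c)) : shrinkFactor a b c = 1 := by
  have hmin : max (dist a c) (dist b c) - min (dist a c) (dist b c) ≤ dist a b :=
    (max_sub_min_eq_abs' _ _).trans_le (abs_dist_sub_le a b c)
  rw [shrinkFactor, projIcc_of_right_le]
  rw [le_div_iff₀ hl]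
  linarith

theorem IsShortestSide.shrinkFactor_mul_le {a b c : α} (h : IsShortestSide a b c) :
    shrinkFactor a b c * max (dist a c) (dist b c) ≤
      2 * (min (dist a c) (dist b c) - dist a b) := by
  have hN : 0 ≤ 2 * (min (dist a c) (dist b c) - dist a b) := by
    linarith [le_min h.1 h.2]
  rcases (dist_nonneg.trans (le_max_left (dist a c) (dist b c))).eq_or_lt with hl | hl
  · rw [← hl, mul_zero]
    exact hN
  · have ht : shrinkFactor a b c ≤
        2 * (min (dist a c) (dist b c) - dist a b) / max (dist a c) (dist b c) := by
      rw [shrinkFactor, coe_projIcc, mul_sub]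
      exact max_le (by rw [← mul_sub]; positivity) (min_le_right _ _)
    calc _ ≤ 2 * (min (dist a c) (dist b c) - dist a b) / max (dist a c) (dist b c) *
          max (dist a c) (dist b c) := by gcongr
      _ = _ := div_mul_cancel₀ _ hl.ne'

theorem abs_div_sub_div_mul_le {N N' l l' δ ε C : ℝ} (hl : 0 < l) (hl' : 0 < l')
    (hN' : |N'| ≤ C * l') (hN : |N - N'| ≤ δ) (hll : |l - l'| ≤ ε) :
    |N / l - N' / l'| * l ≤ δ + C * ε := by
  have hratio : |N' / l'| ≤ C := by
    rwa [abs_div, abs_of_pos hl', div_le_iff₀ hl']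
  calc |N / l - N' / l'| * l = |(N - N') + N' / l' * (l' - l)| := by
        rw [← abs_of_pos hl, ← abs_mul, abs_of_pos hl]
        congr 1
        field_simp
        ring
    _ ≤ |N - N'| + |N' / l'| * |l - l'| := by
        rw [abs_sub_comm l l', ← abs_mul]
        exact abs_add_le _ _
    _ ≤ δ + C * ε := by gcongr; exact (abs_nonneg _).trans hratio

theorem abs_shrinkFactor_sub_mul_le {a b c a' b' c' : α} {d : ℝ}
    (hl : 2 * d < max (dist a c) (dist b c))
    (ha : dist a a' ≤ d) (hb : dist b b' ≤ d) (hc : dist c c' ≤ d) :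
    |shrinkFactor a b c - shrinkFactor a' b' c'| * max (dist a c) (dist b c) ≤ 16 * d := by
  have hab := abs_le.1 (abs_dist_sub_dist_le ha hb)
  have hac := abs_dist_sub_dist_le ha hc
  have hbc := abs_dist_sub_dist_le hb hc
  have hmin := abs_le.1 ((abs_min_sub_min_le_max _ _ _ _).trans (max_le hac hbc))
  have hmax := abs_le.1 ((abs_max_sub_max_le_max _ _ _ _).trans (max_le hac hbc))
  have hN' : |2 * min (dist a' c') (dist b' c') - 2 * dist a' b'| ≤
      4 * max (dist a' c') (dist b' c') := by
    have hab' : dist a' b' ≤ 2 * max (dist a' c') (dist b' c') :=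
      (dist_triangle_right a' b' c').trans (by
        linarith [le_max_left (dist a' c') (dist b' c'), le_max_right (dist a' c') (dist b' c')])
    rw [abs_le]
    constructor <;> linarith [min_le_max (a := dist a' c') (b := dist b' c'),
      dist_nonneg (x := a') (y := b'),
      le_min (dist_nonneg (x := a') (y := c')) (dist_nonneg (x := b') (y := c'))]
  have hlip : |shrinkFactor a b c - shrinkFactor a' b' c'| ≤
      |(2 * min (dist a c) (dist b c) - 2 * dist a b) / max (dist a c) (dist b c) -
        (2 * min (dist a' c') (dist b' c') - 2 * dist a' b') / max (dist a' c') (dist b' c')| := by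
    simpa only [shrinkFactor, NNReal.coe_one, one_mul, Subtype.dist_eq, Real.dist_eq] using
      (LipschitzWith.projIcc zero_le_one).dist_le_mul _ _
  have hl' : 0 < max (dist a' c') (dist b' c') := by linarith
  calc _ ≤ _ * max (dist a c) (dist b c) := by gcongr
    _ ≤ 8 * d + 4 * (2 * d) := abs_div_sub_div_mul_le (by linarith) hl' hN'
        (by rw [abs_le]; constructor <;> linarith) (abs_le.2 ⟨by linarith, by linarith⟩)
    _ = 16 * d := by ring

end PseudoMetric

section Normed

variable {X : Type*} [NormedAddCommGroup X] [NormedSpace ℝ X]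

theorem dist_lineMap_lineMap_le (p q p' q' : X) {t t' : ℝ} (ht' : t' ∈ Icc (0 : ℝ) 1) :
    dist (lineMap p q t) (lineMap p' q' t') ≤
      |t - t'| * dist p q + max (dist p p') (dist q q') := by
  have hconv : dist (lineMap p q t' : X) (lineMap p' q' t') ≤ max (dist p p') (dist q q') := by
    have hsub : lineMap p q t' - lineMap p' q' t' = (1 - t') • (p - p') + t' • (q - q') := by
      simp only [lineMap_apply_module]
      module
    rw [dist_eq_norm, hsub]
    calc _ ≤ ‖(1 - t') • (p - p')‖ + ‖t' • (q - q')‖ := norm_add_le _ _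
      _ = (1 - t') * dist p p' + t' * dist q q' := by
        rw [norm_smul, norm_smul, Real.norm_of_nonneg (sub_nonneg.2 ht'.2),
          Real.norm_of_nonneg ht'.1, dist_eq_norm, dist_eq_norm]
      _ ≤ _ := Convex.combo_le_max _ _ (sub_nonneg.2 ht'.2) ht'.1 (by ring)
  calc _ ≤ dist (lineMap p q t : X) (lineMap p q t') +
        dist (lineMap p q t' : X) (lineMap p' q' t') := dist_triangle _ _ _
    _ ≤ _ := by
        rw [dist_lineMap_lineMap, Real.dist_eq]
        gcongr

noncomputable def centroid3 (a b c : X) : X := (3 : ℝ)⁻¹ • (a + b + c)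

theorem centroid3_comm (a b c : X) : centroid3 a b c = centroid3 b a c := by
  rw [centroid3, centroid3, add_comm a b]

theorem centroid3_rotate (a b c : X) : centroid3 a b c = centroid3 b c a := by
  rw [centroid3, centroid3, add_rotate]

theorem centroid3_eq_lineMap (a b c : X) :
    centroid3 a b c = lineMap c (midpoint ℝ a b) (2 / 3 : ℝ) := by
  rw [centroid3, lineMap_apply_module, midpoint_eq_smul_add, invOf_eq_inv]
  module

theorem dist_centroid3_le (a b c a' b' c' : X) :
    dist (centroid3 a b c) (centroid3 a' b' c') ≤ (dist a a' + dist b b' + dist c c') / 3 := by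
  have hsub : centroid3 a b c - centroid3 a' b' c' =
      (3 : ℝ)⁻¹ • ((a - a') + (b - b') + (c - c')) := by
    simp only [centroid3]
    module
  rw [dist_eq_norm, hsub, norm_smul, Real.norm_of_nonneg (by norm_num), dist_eq_norm,
    dist_eq_norm, dist_eq_norm]
  linarith [norm_add₃_le (a := a - a') (b := b - b') (c := c - c')]

theorem dist_midpoint_le_max (a b c : X) :
    dist c (midpoint ℝ a b) ≤ max (dist a c) (dist b c) := by
  have := dist_midpoint_midpoint_le c c a b
  rw [midpoint_self, dist_comm c a, dist_comm c b] at this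
  linarith [le_max_left (dist a c) (dist b c), le_max_right (dist a c) (dist b c)]

theorem dist_centroid3_midpoint_le (a b c : X) :
    dist (centroid3 a b c) (midpoint ℝ a b) ≤ max (dist a c) (dist b c) / 3 := by
  rw [centroid3_eq_lineMap, dist_lineMap_right, Real.norm_of_nonneg (by norm_num)]
  linarith [dist_midpoint_le_max a b c]

theorem dist_centroid3_right_le (a b c : X) :
    dist (centroid3 a b c) c ≤ 2 / 3 * max (dist a c) (dist b c) := by
  rw [centroid3_eq_lineMap, dist_lineMap_left, Real.norm_of_nonneg (by norm_num)]
  gcongr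
  exact dist_midpoint_le_max a b c

noncomputable def triangleRetract (a b c : X) : Set X :=
  {lineMap (centroid3 a b c) (midpoint ℝ a b) (shrinkFactor a b c),
    lineMap (centroid3 a b c) c (shrinkFactor a b c)}

theorem triangleRetract_nonempty (a b c : X) : (triangleRetract a b c).Nonempty :=
  insert_nonempty _ _

theorem triangleRetract_finite (a b c : X) : (triangleRetract a b c).Finite :=
  (finite_singleton _).insert _

theorem triangleRetract_encard_le_two (a b c : X) : (triangleRetract a b c).encard ≤ 2 :=
  (encard_insert_le _ _).trans (by rw [encard_singleton]; rfl)

theorem triangleRetract_comm (a b c : X) : triangleRetract a b c = triangleRetract b a c := by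
  rw [triangleRetract, triangleRetract, centroid3_comm, midpoint_comm, shrinkFactor_comm]

theorem triangleRetract_of_shrinkFactor_eq_one {a b c : X} (h : shrinkFactor a b c = 1) :
    triangleRetract a b c = {midpoint ℝ a b, c} := by
  rw [triangleRetract, h, lineMap_apply_one, lineMap_apply_one]

theorem triangleRetract_self_left (u v : X) : triangleRetract u u v = {u, v} := by
  rcases eq_or_ne u v with rfl | huv
  · rw [triangleRetract, midpoint_self, show centroid3 u u u = u by rw [centroid3]; module,
      lineMap_same_apply]
  · have hl : 0 < max (dist u v) (dist u v) := by simpa using huv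
    rw [triangleRetract_of_shrinkFactor_eq_one (shrinkFactor_eq_one hl (by simp)),
      midpoint_self]

theorem triangleRetract_subset_convexHull (a b c : X) :
    triangleRetract a b c ⊆ convexHull ℝ {a, b, c} := by
  have hconv := convex_convexHull ℝ ({a, b, c} : Set X)
  have hc : c ∈ convexHull ℝ ({a, b, c} : Set X) := subset_convexHull ℝ _ (by simp)
  have hM : midpoint ℝ a b ∈ convexHull ℝ ({a, b, c} : Set X) :=
    hconv.midpoint_mem (subset_convexHull ℝ _ (by simp)) (subset_convexHull ℝ _ (by simp))
  have hG : centroid3 a b c ∈ convexHull ℝ ({a, b, c} : Set X) := by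
    rw [centroid3_eq_lineMap]
    exact hconv.lineMap_mem hc hM ⟨by norm_num, by norm_num⟩
  rintro z (rfl | rfl)
  exacts [hconv.lineMap_mem hG hM (shrinkFactor_mem_Icc a b c),
    hconv.lineMap_mem hG hc (shrinkFactor_mem_Icc a b c)]

theorem hausdorffDist_triangleRetract_le_diam (a b c : X) :
    hausdorffDist (triangleRetract a b c) {a, b, c} ≤ diam ({a, b, c} : Set X) := by
  have hbdd : IsBounded (convexHull ℝ ({a, b, c} : Set X)) :=
    isBounded_convexHull.2 (toFinite _).isBounded
  calc _ ≤ diam (triangleRetract a b c ∪ {a, b, c}) :=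
        hausdorffDist_le_diam (triangleRetract_nonempty a b c)
          (triangleRetract_finite a b c).isBounded (insert_nonempty _ _) (toFinite _).isBounded
    _ ≤ diam (convexHull ℝ ({a, b, c} : Set X)) :=
        diam_mono (union_subset (triangleRetract_subset_convexHull a b c)
          (subset_convexHull ℝ _)) hbdd
    _ = _ := convexHull_diam _

theorem IsShortestSide.triangleRetract_subset_closedBall {a b c : X} (h : IsShortestSide a b c) :
    triangleRetract a b c ⊆
      closedBall (centroid3 a b c) (4 / 3 * (min (dist a c) (dist b c) - dist a b)) := by
  have ht := shrinkFactor_mem_Icc a b c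
  have hmove : ∀ w, dist (centroid3 a b c) w ≤ 2 / 3 * max (dist a c) (dist b c) →
      lineMap (centroid3 a b c) w (shrinkFactor a b c) ∈
        closedBall (centroid3 a b c) (4 / 3 * (min (dist a c) (dist b c) - dist a b)) := by
    intro w hw
    rw [mem_closedBall, dist_lineMap_left, Real.norm_of_nonneg ht.1]
    calc _ ≤ shrinkFactor a b c * (2 / 3 * max (dist a c) (dist b c)) := by gcongr; exact ht.1
      _ = 2 / 3 * (shrinkFactor a b c * max (dist a c) (dist b c)) := by ring
      _ ≤ _ := by linarith [h.shrinkFactor_mul_le]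
  rintro z (rfl | rfl)
  · exact hmove _ (by linarith [dist_centroid3_midpoint_le a b c,
      dist_nonneg.trans (le_max_left (dist a c) (dist b c))])
  · exact hmove _ (dist_centroid3_right_le a b c)

theorem hausdorffDist_midpoint_pair_le (a b c : X) :
    hausdorffDist ({midpoint ℝ a b, c} : Set X) {a, b, c} ≤ dist a b / 2 := by
  have hMa : dist (midpoint ℝ a b) a = dist a b / 2 := by
    rw [dist_comm, dist_left_midpoint, Real.norm_two, inv_mul_eq_div]
  have hMb : dist (midpoint ℝ a b) b = dist a b / 2 := by
    rw [dist_comm, dist_right_midpoint, Real.norm_two, inv_mul_eq_div]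
  refine hausdorffDist_le_of_mem_dist (by positivity) ?_ ?_
  · rintro z (rfl | rfl)
    exacts [⟨a, by simp, hMa.le⟩, ⟨z, by simp, by rw [dist_self]; positivity⟩]
  · intro z hz
    simp only [mem_insert_iff, mem_singleton_iff] at hz
    rcases hz with rfl | rfl | rfl
    exacts [⟨midpoint ℝ z b, by simp, by rw [dist_comm, hMa]⟩,
      ⟨midpoint ℝ a z, by simp, by rw [dist_comm, hMb]⟩,
      ⟨z, by simp, by rw [dist_self]; positivity⟩]

theorem hausdorffDist_triangleRetract_le_diam_add (a b c a' b' c' : X) :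
    hausdorffDist (triangleRetract a b c) (triangleRetract a' b' c') ≤
      diam ({a, b, c} : Set X) + hausdorffDist ({a, b, c} : Set X) {a', b', c'} +
        diam ({a', b', c'} : Set X) := by
  have hy := hausdorffDist_triangleRetract_le_diam a' b' c'
  rw [hausdorffDist_comm] at hy
  linarith [hausdorffDist_triangleRetract_le_diam a b c,
    hausdorffDist_le_add_add (v := triangleRetract a' b' c')
      (triangleRetract_finite a b c).isBounded (toFinite {a, b, c}).isBounded (toFinite {a', b', c'}).isBounded
      (triangleRetract_nonempty a b c) (insert_nonempty _ _) (insert_nonempty _ _)]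

theorem hausdorffDist_triangleRetract_le_of_dist_le {a b c a' b' c' : X} {d : ℝ}
    (hl : 2 * d < max (dist a c) (dist b c))
    (ha : dist a a' ≤ d) (hb : dist b b' ≤ d) (hc : dist c c' ≤ d) :
    hausdorffDist (triangleRetract a b c) (triangleRetract a' b' c') ≤ 12 * d := by
  have hd : 0 ≤ d := dist_nonneg.trans ha
  have ht := abs_shrinkFactor_sub_mul_le hl ha hb hc
  have hG : dist (centroid3 a b c) (centroid3 a' b' c') ≤ d :=
    (dist_centroid3_le a b c a' b' c').trans (by linarith)
  have hM : dist (midpoint ℝ a b) (midpoint ℝ a' b') ≤ d :=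
    (dist_midpoint_midpoint_le a b a' b').trans (by linarith)
  have hmove : ∀ w w' : X, dist (centroid3 a b c) w ≤ 2 / 3 * max (dist a c) (dist b c) →
      dist w w' ≤ d →
      dist (lineMap (centroid3 a b c) w (shrinkFactor a b c))
        (lineMap (centroid3 a' b' c') w' (shrinkFactor a' b' c')) ≤ 12 * d := by
    intro w w' hw hww'
    calc _ ≤ |shrinkFactor a b c - shrinkFactor a' b' c'| * dist (centroid3 a b c) w +
          max (dist (centroid3 a b c) (centroid3 a' b' c')) (dist w w') :=
          dist_lineMap_lineMap_le _ _ _ _ (shrinkFactor_mem_Icc a' b' c')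
      _ ≤ |shrinkFactor a b c - shrinkFactor a' b' c'| *
          (2 / 3 * max (dist a c) (dist b c)) + d := by
          gcongr
          exact max_le hG hww'
      _ = 2 / 3 * (|shrinkFactor a b c - shrinkFactor a' b' c'| * max (dist a c) (dist b c)) +
          d := by ring
      _ ≤ 12 * d := by linarith
  refine hausdorffDist_pair_le (hmove _ _ ?_ hM) (hmove _ _ (dist_centroid3_right_le a b c) hc)
  linarith [dist_centroid3_midpoint_le a b c, dist_nonneg.trans (le_max_left (dist a c) (dist b c))]

theorem hausdorffDist_triangleRetract_rotate_le {a b c a' b' c' : X} {d : ℝ}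
    (h : IsShortestSide a b c) (h' : IsShortestSide b' c' a')
    (ha : dist a a' ≤ d) (hb : dist b b' ≤ d) (hc : dist c c' ≤ d) :
    hausdorffDist (triangleRetract a b c) (triangleRetract b' c' a') ≤ 12 * d := by
  have hab := abs_le.1 (abs_dist_sub_dist_le ha hb)
  have hbc := abs_le.1 (abs_dist_sub_dist_le hb hc)
  have hgap : min (dist a c) (dist b c) - dist a b ≤ 4 * d := by
    linarith [min_le_right (dist a c) (dist b c), h'.1, dist_comm a' b']
  have hgap' : min (dist b' a') (dist c' a') - dist b' c' ≤ 4 * d := by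
    linarith [min_le_left (dist b' a') (dist c' a'), h.2, dist_comm a' b']
  have hG : dist (centroid3 a b c) (centroid3 b' c' a') ≤ d := by
    rw [← centroid3_rotate a' b' c']
    exact (dist_centroid3_le a b c a' b' c').trans (by linarith)
  calc _ ≤ 4 / 3 * (min (dist a c) (dist b c) - dist a b) +
        dist (centroid3 a b c) (centroid3 b' c' a') +
        4 / 3 * (min (dist b' a') (dist c' a') - dist b' c') :=
        hausdorffDist_le_of_subset_closedBall (triangleRetract_nonempty _ _ _)
          (triangleRetract_nonempty _ _ _) h.triangleRetract_subset_closedBall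
          h'.triangleRetract_subset_closedBall
    _ ≤ 12 * d := by linarith

theorem hausdorffDist_triangleRetract_le_of_near_pair {a b c a' b' c' : X} {d : ℝ}
    (h : IsShortestSide a b c) (h' : IsShortestSide a' b' c')
    (hab : dist a b ≤ 2 * d) (hl : 26 * d < diam ({a, b, c} : Set X))
    (hxy : ∀ u ∈ ({a, b, c} : Set X), ∃ v ∈ ({a', b', c'} : Set X), dist u v ≤ d)
    (hyx : ∀ v ∈ ({a', b', c'} : Set X), ∃ u ∈ ({a, b, c} : Set X), dist v u ≤ d) :
    hausdorffDist (triangleRetract a b c) (triangleRetract a' b' c') ≤ 5 * d := by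
  have hd : 0 ≤ d := by
    obtain ⟨u, -, hu⟩ := hyx a' (by simp)
    exact dist_nonneg.trans hu
  have hdiam := diam_le_diam_add_two_mul (toFinite {a', b', c'}).isBounded hd hxy
  rw [h.diam_eq] at hl hdiam
  rw [h'.diam_eq] at hdiam
  have hnear : ∀ v ∈ ({a', b', c'} : Set X), dist v a ≤ 3 * d ∨ dist v c ≤ 3 * d := by
    intro v hv
    obtain ⟨u, hu, hvu⟩ := hyx v hv
    simp only [mem_insert_iff, mem_singleton_iff] at hu
    rcases hu with rfl | rfl | rfl
    · exact Or.inl (by linarith)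
    · exact Or.inl (by linarith [dist_triangle v u a, dist_comm a u])
    · exact Or.inr (by linarith)
  have hab' := h'.dist_le_of_near_pair hnear
  rw [triangleRetract_of_shrinkFactor_eq_one (shrinkFactor_eq_one (by linarith) (by linarith)),
    triangleRetract_of_shrinkFactor_eq_one (shrinkFactor_eq_one (by linarith) (by linarith))]
  have hx := hausdorffDist_midpoint_pair_le a b c
  have hy := hausdorffDist_midpoint_pair_le a' b' c'
  rw [hausdorffDist_comm] at hy
  linarith [hausdorffDist_le_of_mem_dist hd hxy hyx,
    hausdorffDist_le_add_add (v := {midpoint ℝ a' b', c'}) (toFinite {midpoint ℝ a b, c}).isBounded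
      (toFinite {a, b, c}).isBounded (toFinite {a', b', c'}).isBounded
      (insert_nonempty _ _) (insert_nonempty _ _) (insert_nonempty _ _)]

theorem hausdorffDist_triangleRetract_le_of_separated {a b c a' b' c' : X} {d : ℝ}
    (h : IsShortestSide a b c) (h' : IsShortestSide a' b' c') (hab : 2 * d < dist a b)
    (hxy : ∀ u ∈ ({a, b, c} : Set X), ∃ v ∈ ({a', b', c'} : Set X), dist u v ≤ d) :
    hausdorffDist (triangleRetract a b c) (triangleRetract a' b' c') ≤ 12 * d := by
  obtain ⟨va, hva, ha⟩ := hxy a (by simp)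
  obtain ⟨vb, hvb, hb⟩ := hxy b (by simp)
  obtain ⟨vc, hvc, hc⟩ := hxy c (by simp)
  have hne : ∀ {u v u' v' : X}, 2 * d < dist u v → dist u u' ≤ d → dist v v' ≤ d → u' ≠ v' :=
    fun huv hu hv heq ↦ by
      have := abs_le.1 (abs_dist_sub_dist_le hu hv)
      rw [heq, dist_self] at this
      linarith
  have hl : 2 * d < max (dist a c) (dist b c) := hab.trans_le (h.1.trans (le_max_left _ _))
  rcases eq_perm_of_mem_triple hva hvb hvc (hne hab ha hb) (hne (hab.trans_le h.1) ha hc)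
      (hne (hab.trans_le h.2) hb hc) with
    ⟨rfl, rfl, rfl⟩ | ⟨rfl, rfl, rfl⟩ | ⟨rfl, rfl, rfl⟩ | ⟨rfl, rfl, rfl⟩ | ⟨rfl, rfl, rfl⟩ |
      ⟨rfl, rfl, rfl⟩
  · exact hausdorffDist_triangleRetract_le_of_dist_le hl ha hb hc
  · rw [triangleRetract_comm a']
    exact hausdorffDist_triangleRetract_le_of_dist_le hl ha hb hc
  · exact hausdorffDist_triangleRetract_rotate_le h h' ha hb hc
  · rw [triangleRetract_comm a']
    exact hausdorffDist_triangleRetract_rotate_le h h'.swap ha hb hc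
  · rw [triangleRetract_comm a]
    exact hausdorffDist_triangleRetract_rotate_le h.swap h' hb ha hc
  · rw [triangleRetract_comm a, triangleRetract_comm a']
    exact hausdorffDist_triangleRetract_rotate_le h.swap h'.swap hb ha hc

theorem hausdorffDist_triangleRetract_le {a b c a' b' c' : X}
    (h : IsShortestSide a b c) (h' : IsShortestSide a' b' c') :
    hausdorffDist (triangleRetract a b c) (triangleRetract a' b' c') ≤
      55 * hausdorffDist ({a, b, c} : Set X) {a', b', c'} := by
  set d := hausdorffDist ({a, b, c} : Set X) {a', b', c'}
  have hd : 0 ≤ d := hausdorffDist_nonneg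
  have hxy : ∀ u ∈ ({a, b, c} : Set X), ∃ v ∈ ({a', b', c'} : Set X), dist u v ≤ d :=
    fun u hu ↦ exists_dist_le_hausdorffDist (toFinite _).isBounded (toFinite _).isCompact
      (insert_nonempty _ _) (insert_nonempty _ _) hu
  have hyx : ∀ v ∈ ({a', b', c'} : Set X), ∃ u ∈ ({a, b, c} : Set X), dist v u ≤ d := by
    intro v hv
    rw [show d = hausdorffDist ({a', b', c'} : Set X) {a, b, c} from hausdorffDist_comm]
    exact exists_dist_le_hausdorffDist (toFinite _).isBounded (toFinite _).isCompact
      (insert_nonempty _ _) (insert_nonempty _ _) hv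
  rcases le_or_gt (diam ({a, b, c} : Set X)) (26 * d) with hsmall | hlarge
  · have := diam_le_diam_add_two_mul (toFinite {a, b, c}).isBounded hd hyx
    linarith [hausdorffDist_triangleRetract_le_diam_add a b c a' b' c']
  rcases le_or_gt (dist a b) (2 * d) with hab | hab
  · linarith [hausdorffDist_triangleRetract_le_of_near_pair h h' hab hlarge hxy hyx]
  · linarith [hausdorffDist_triangleRetract_le_of_separated h h' hab hxy]

noncomputable def retraction (x : Set X) : Set X :=
  if h : x.encard = 3 then
    let p := (exists_isShortestSide_of_encard_eq_three h).choose
    triangleRetract p.1 p.2.1 p.2.2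
  else x

theorem retraction_of_encard_le_two {x : Set X} (h : x.encard ≤ 2) : retraction x = x :=
  dif_neg fun h3 ↦ absurd (h3 ▸ h) (by decide)

theorem exists_retraction_eq_triangleRetract {x : Set X} (hne : x.Nonempty) (h3 : x.encard ≤ 3) :
    ∃ a b c, IsShortestSide a b c ∧ x = {a, b, c} ∧ retraction x = triangleRetract a b c := by
  by_cases h : x.encard = 3
  · obtain ⟨hs, hx⟩ := (exists_isShortestSide_of_encard_eq_three h).choose_spec
    exact ⟨_, _, _, hs, hx, dif_pos h⟩
  · have h2 := encard_le_two_of_le_three h3 h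
    obtain ⟨u, v, rfl⟩ := exists_eq_pair_of_encard_le_two hne h2
    refine ⟨u, u, v, isShortestSide_self_left u v, by simp, ?_⟩
    rw [retraction_of_encard_le_two h2, triangleRetract_self_left]

end Normed

end FiniteSubsetRetraction

open FiniteSubsetRetraction in
/-- For any normed space `X` there is a Lipschitz retraction `X(3) → X(2)` with
Lipschitz constant `731`. -/
theorem stmt_7 {X : Type*} [NormedAddCommGroup X] [NormedSpace ℝ X] :
    ∃ r : Set X → Set X,
      (∀ x : Set X, x.Nonempty → x.encard ≤ 3 → (r x).Nonempty ∧ (r x).encard ≤ 2) ∧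
      (∀ x : Set X, x.Nonempty → x.encard ≤ 2 → r x = x) ∧
      (∀ x y : Set X, x.Nonempty → x.encard ≤ 3 → y.Nonempty → y.encard ≤ 3 →
        Metric.hausdorffDist (r x) (r y) ≤ 731 * Metric.hausdorffDist x y) := by
  refine ⟨retraction, fun x hne h3 ↦ ?_, fun x _ h2 ↦ retraction_of_encard_le_two h2,
    fun x y hx hx3 hy hy3 ↦ ?_⟩
  · obtain ⟨a, b, c, -, -, hr⟩ := exists_retraction_eq_triangleRetract hne h3
    rw [hr]
    exact ⟨triangleRetract_nonempty a b c, triangleRetract_encard_le_two a b c⟩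
  · obtain ⟨a, b, c, h, rfl, hr⟩ := exists_retraction_eq_triangleRetract hx hx3
    obtain ⟨a', b', c', h', rfl, hr'⟩ := exists_retraction_eq_triangleRetract hy hy3
    rw [hr, hr']
    calc _ ≤ 55 * hausdorffDist ({a, b, c} : Set X) {a', b', c'} :=
          hausdorffDist_triangleRetract_le h h'
      _ ≤ 731 * hausdorffDist ({a, b, c} : Set X) {a', b', c'} :=
          mul_le_mul_of_nonneg_right (by norm_num) hausdorffDist_nonneg
end

section
/- Let X be a real normed space, let τ > 6, and let x be a nonempty finite subset of X with diam(x) = 1 such that there exists a nonempty set z ⊆ X with at most 2 elements and d_H(x, z) < 1/τ. Then there exist nonempty sets x', x'' with x = x' ∪ x'', x' ∩ x'' = ∅, diam(x') ≤ 2/τ, diam(x'') ≤ 2/τ, and dist(x', x'') ≥ 1 − 4/τ. Moreover, this decomposition is unique up to interchanging the two pieces: if y', y'' is any other pair of nonempty sets with x = y' ∪ y'', y' ∩ y'' = ∅, diam(y') ≤ 2/τ, diam(y'') ≤ 2/τ and dist(y', y'') ≥ 1 − 4/τ, then {y', y''} = {x', x''}. -/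
/-!
Every point of `x` lies within `1/τ` of one of the (at most two) points `p, q` of `z`. The
points near `p` and the remaining ones (all near `q`) form two clusters of diameter at most
`2/τ`; `diam x = 1` forces `dist p q ≥ 1 - 2/τ`, hence the clusters are `1 - 4/τ` apart, and
neither is empty because `2/τ < 1`. For uniqueness: as `τ > 6`, `2/τ < 1 - 4/τ`, so in any such
decomposition two points lie in the same cluster iff they are within `2/τ` of each other.
-/

open Metric Bornology

namespace Set

theorem exists_subset_pair_of_encard_le_two {α : Type*} {z : Set α} (hne : z.Nonempty)
    (hz : z.encard ≤ 2) : ∃ p q, z ⊆ {p, q} := by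
  obtain ⟨p, hp⟩ := hne
  have hrest : (z \ {p}).Subsingleton := by
    rw [← encard_le_one_iff_subsingleton]
    exact (ENat.add_le_add_iff_right ENat.one_ne_top).mp
      ((encard_sdiff_singleton_add_one hp).trans_le hz)
  obtain ⟨q, hq⟩ : ∃ q, z \ {p} ⊆ {q} := by
    obtain h | ⟨q, hq⟩ := hrest.eq_empty_or_singleton
    · exact ⟨p, h ▸ empty_subset _⟩
    · exact ⟨q, hq.subset⟩
  exact ⟨p, q, (subset_insert_sdiff_singleton p z).trans (insert_subset_insert hq)⟩

end Set

namespace Metric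

variable {X : Type*} [PseudoMetricSpace X]

theorem isBounded_of_diam_ne_zero {s : Set X} (h : diam s ≠ 0) : IsBounded s :=
  not_imp_comm.1 diam_eq_zero_of_unbounded h

theorem nonempty_of_diam_ne_zero {s : Set X} (h : diam s ≠ 0) : s.Nonempty :=
  Set.nonempty_iff_ne_empty.2 fun hs ↦ h (hs ▸ diam_empty)

theorem subset_ball_union_ball_of_hausdorffDist_lt {x z : Set X} {p q : X} {r : ℝ}
    (hfin : hausdorffEDist x z ≠ ⊤) (hxz : hausdorffDist x z < r) (hz : z ⊆ {p, q}) :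
    x ⊆ ball p r ∪ ball q r := by
  intro a ha
  obtain ⟨y, hy, hay⟩ := exists_dist_lt_of_hausdorffDist_lt ha hxz hfin
  rcases hz hy with rfl | rfl
  exacts [Or.inl hay, Or.inr hay]

theorem diam_le_two_mul_of_subset_ball {s : Set X} {p : X} {r : ℝ} (hr : 0 ≤ r)
    (hs : s ⊆ ball p r) : diam s ≤ 2 * r :=
  (diam_mono hs isBounded_ball).trans (diam_ball hr)

theorem diam_le_dist_add_of_subset_ball_union_ball {x : Set X} {p q : X} {r : ℝ} (hr : 0 ≤ r)
    (hx : x ⊆ ball p r ∪ ball q r) : diam x ≤ dist p q + 2 * r := by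
  refine diam_le_of_forall_dist_le (by positivity) fun a ha b hb ↦ ?_
  rcases hx ha with ha | ha <;> rcases hx hb with hb | hb <;> rw [mem_ball] at ha hb
  · linarith [dist_triangle_right a b p, dist_nonneg (x := p) (y := q)]
  · linarith [dist_triangle4 a p q b, dist_comm q b]
  · linarith [dist_triangle4 a q p b, dist_comm p b, dist_comm p q]
  · linarith [dist_triangle_right a b q, dist_nonneg (x := p) (y := q)]

end Metric

open Metric

/-- The paper's `(d, s)`-decomposition `(A, B)` of `x`. -/
structure IsClusterSplit {X : Type*} [PseudoMetricSpace X] (x : Set X) (d s : ℝ)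
    (A B : Set X) : Prop where
  union_eq : x = A ∪ B
  inter_eq_empty : A ∩ B = ∅
  diam_left_le : diam A ≤ d
  diam_right_le : diam B ≤ d
  le_dist : ∀ a ∈ A, ∀ b ∈ B, s ≤ dist a b

namespace IsClusterSplit

variable {X : Type*} [PseudoMetricSpace X] {x A B C D : Set X} {d s : ℝ}

theorem symm (h : IsClusterSplit x d s A B) : IsClusterSplit x d s B A where
  union_eq := h.union_eq.trans (Set.union_comm A B)
  inter_eq_empty := (Set.inter_comm B A).trans h.inter_eq_empty
  diam_left_le := h.diam_right_le
  diam_right_le := h.diam_left_le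
  le_dist b hb a ha := dist_comm b a ▸ h.le_dist a ha b hb

theorem right_eq_diff (h : IsClusterSplit x d s A B) : B = x \ A := by
  rw [h.union_eq, Set.union_sdiff_left, eq_comm, sdiff_eq_left, Set.disjoint_iff_inter_eq_empty,
    Set.inter_comm, h.inter_eq_empty]

theorem left_eq_setOf_dist_le (h : IsClusterSplit x d s A B) (hx : IsBounded x) (hds : d < s)
    {a : X} (ha : a ∈ A) : A = {y ∈ x | dist a y ≤ d} := by
  have hA : A ⊆ x := h.union_eq ▸ Set.subset_union_left
  ext y
  refine ⟨fun hy ↦ ⟨hA hy, (dist_le_diam_of_mem (hx.subset hA) ha hy).trans h.diam_left_le⟩,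
    fun ⟨hy, hay⟩ ↦ ?_⟩
  rcases h.union_eq ▸ hy with hy | hy
  · exact hy
  · exact absurd (h.le_dist a ha y hy) (by linarith)

theorem eq_or_eq_swap (h : IsClusterSplit x d s A B) (h' : IsClusterSplit x d s C D)
    (hx : IsBounded x) (hds : d < s) (hA : A.Nonempty) :
    (C = A ∧ D = B) ∨ (C = B ∧ D = A) := by
  obtain ⟨a, ha⟩ := hA
  have hCA {C D : Set X} (h' : IsClusterSplit x d s C D) (haC : a ∈ C) : C = A ∧ D = B := by
    have hC : C = A := (h'.left_eq_setOf_dist_le hx hds haC).trans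
      (h.left_eq_setOf_dist_le hx hds ha).symm
    exact ⟨hC, h'.right_eq_diff.trans (hC ▸ h.right_eq_diff.symm)⟩
  have hax : a ∈ x := h.union_eq ▸ Or.inl ha
  rcases h'.union_eq ▸ hax with haC | haD
  · exact .inl (hCA h' haC)
  · exact .inr (hCA h'.symm haD).symm

end IsClusterSplit

section Balls

variable {X : Type*} [PseudoMetricSpace X] {x : Set X} {p q : X} {r : ℝ}

theorem isClusterSplit_inter_ball_sdiff_ball (hr : 0 ≤ r) (hx : x ⊆ ball p r ∪ ball q r) :
    IsClusterSplit x (2 * r) (diam x - 4 * r) (x ∩ ball p r) (x \ ball p r) := by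
  have hB : x \ ball p r ⊆ ball q r := fun a ha ↦ (hx ha.1).resolve_left ha.2
  refine ⟨(Set.inter_union_sdiff x _).symm,
    Set.disjoint_iff_inter_eq_empty.1 (Set.disjoint_sdiff_right.mono_left Set.inter_subset_right),
    ?_, ?_, ?_⟩
  · exact diam_le_two_mul_of_subset_ball hr Set.inter_subset_right
  · exact diam_le_two_mul_of_subset_ball hr hB
  · intro a ha b hb
    have hap : dist a p < r := ha.2
    have hbq : dist b q < r := hB hb
    linarith [diam_le_dist_add_of_subset_ball_union_ball hr hx, dist_triangle4 p a b q,
      dist_comm p a]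

theorem nonempty_inter_ball_and_sdiff_ball (hr : 0 ≤ r) (hx : x ⊆ ball p r ∪ ball q r)
    (hdiam : 2 * r < diam x) : (x ∩ ball p r).Nonempty ∧ (x \ ball p r).Nonempty := by
  constructor
  · by_contra hA
    exact hdiam.not_ge (diam_le_two_mul_of_subset_ball hr fun a ha ↦
      (hx ha).resolve_left fun hap ↦ hA ⟨a, ha, hap⟩)
  · by_contra hB
    exact hdiam.not_ge (diam_le_two_mul_of_subset_ball hr fun a ha ↦
      by_contra fun hap ↦ hB ⟨a, ha, hap⟩)

end Balls

theorem stmt_9_general {X : Type*} [NormedAddCommGroup X]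
    (τ : ℝ) (hτ : 6 < τ) (x : Set X)
    (hxdiam : Metric.diam x = 1)
    (hthin : ∃ z : Set X, z.Nonempty ∧ z.encard ≤ 2 ∧
      Metric.hausdorffDist x z < 1 / τ) :
    ∃ x' x'' : Set X, x'.Nonempty ∧ x''.Nonempty ∧ x = x' ∪ x'' ∧ x' ∩ x'' = ∅ ∧
      Metric.diam x' ≤ 2 / τ ∧ Metric.diam x'' ≤ 2 / τ ∧
      (∀ a ∈ x', ∀ b ∈ x'', 1 - 4 / τ ≤ dist a b) ∧
      (∀ y' y'' : Set X, y'.Nonempty → y''.Nonempty → x = y' ∪ y'' → y' ∩ y'' = ∅ →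
        Metric.diam y' ≤ 2 / τ → Metric.diam y'' ≤ 2 / τ →
        (∀ a ∈ y', ∀ b ∈ y'', 1 - 4 / τ ≤ dist a b) →
        (y' = x' ∧ y'' = x'') ∨ (y' = x'' ∧ y'' = x')) := by
  obtain ⟨z, hzne, hz2, hxz⟩ := hthin
  obtain ⟨p, q, hzpq⟩ := Set.exists_subset_pair_of_encard_le_two hzne hz2
  have hτ0 : 0 < τ := by linarith
  have hr : 0 ≤ 1 / τ := by positivity
  have hxb : IsBounded x := isBounded_of_diam_ne_zero (by simp [hxdiam])
  have hcover : x ⊆ ball p (1 / τ) ∪ ball q (1 / τ) :=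
    subset_ball_union_ball_of_hausdorffDist_lt
      (hausdorffEDist_ne_top_of_nonempty_of_bounded (nonempty_of_diam_ne_zero (by simp [hxdiam]))
        hzne hxb ((Set.toFinite _).isBounded.subset hzpq)) hxz hzpq
  obtain ⟨hAne, hBne⟩ := nonempty_inter_ball_and_sdiff_ball hr hcover
    (by rw [hxdiam, mul_one_div, div_lt_one hτ0]; linarith)
  have hS := isClusterSplit_inter_ball_sdiff_ball hr hcover
  simp only [hxdiam, mul_one_div] at hS
  have hds : 2 / τ < 1 - 4 / τ := by
    rw [lt_sub_iff_add_lt, ← add_div, div_lt_one hτ0]; linarith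
  refine ⟨_, _, hAne, hBne, hS.union_eq, hS.inter_eq_empty, hS.diam_left_le, hS.diam_right_le,
    hS.le_dist, fun y' y'' _ _ hu hi hd' hd'' hsep ↦ ?_⟩
  exact hS.eq_or_eq_swap ⟨hu, hi, hd', hd'', hsep⟩ hxb hds hAne

/-- Cluster decomposition of a 2-thin set: a normalized finite set within Hausdorff
distance `1/τ` of a two-point set admits a `(2/τ, 1 - 4/τ)`-decomposition, which is
unique up to interchanging the two clusters. -/
theorem stmt_9 {X : Type*} [NormedAddCommGroup X] [NormedSpace ℝ X]
    (τ : ℝ) (hτ : 6 < τ) (x : Set X) (hxfin : x.Finite) (hxne : x.Nonempty)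
    (hxdiam : Metric.diam x = 1)
    (hthin : ∃ z : Set X, z.Nonempty ∧ z.encard ≤ 2 ∧
      Metric.hausdorffDist x z < 1 / τ) :
    ∃ x' x'' : Set X, x'.Nonempty ∧ x''.Nonempty ∧ x = x' ∪ x'' ∧ x' ∩ x'' = ∅ ∧
      Metric.diam x' ≤ 2 / τ ∧ Metric.diam x'' ≤ 2 / τ ∧
      (∀ a ∈ x', ∀ b ∈ x'', 1 - 4 / τ ≤ dist a b) ∧
      (∀ y' y'' : Set X, y'.Nonempty → y''.Nonempty → x = y' ∪ y'' → y' ∩ y'' = ∅ →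
        Metric.diam y' ≤ 2 / τ → Metric.diam y'' ≤ 2 / τ →
        (∀ a ∈ y', ∀ b ∈ y'', 1 - 4 / τ ≤ dist a b) →
        (y' = x' ∧ y'' = x'') ∨ (y' = x'' ∧ y'' = x')) :=
  stmt_9_general τ hτ x hxdiam hthin
end

section
/- Let X be a real normed space and let x, y ∈ X be nonzero vectors. Then the function φ(t) := ‖(x − y) + t·(x/‖x‖ − y/‖y‖)‖ is monotone nondecreasing on the interval [−min(‖x‖, ‖y‖), +∞). In particular, ‖(x − y) + t·(x/‖x‖ − y/‖y‖)‖ ≥ ‖x − y‖ for all t ≥ 0 (semi-monotonicity of the radial projection x ↦ x/‖x‖). -/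
/-!
The function `t ↦ ‖(x - y) + t • (‖x‖⁻¹ • x - ‖y‖⁻¹ • y)‖` is convex, being the norm of an affine
function of `t`. A convex function on `[c, ∞)` that attains its minimum at `c` is nondecreasing
there, so it suffices to show that the minimum over `[-min ‖x‖ ‖y‖, ∞)` sits at the left endpoint.
-/

open Set

theorem ConvexOn.monotoneOn_Ici_of_isMinOn {𝕜 β : Type*} [Field 𝕜] [LinearOrder 𝕜]
    [IsStrictOrderedRing 𝕜] [AddCommMonoid β] [LinearOrder β] [IsOrderedCancelAddMonoid β]
    [Module 𝕜 β] [PosSMulStrictMono 𝕜 β] {f : 𝕜 → β} {c : 𝕜}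
    (hf : ConvexOn 𝕜 (Ici c) f) (hmin : IsMinOn f (Ici c) c) : MonotoneOn f (Ici c) := by
  intro s hs t ht hst
  rcases (mem_Ici.mp hs).eq_or_lt with rfl | hcs
  · exact hmin ht
  · exact hf.le_right_of_left_le'' self_mem_Ici ht hcs hst (hmin hs)

theorem convexOn_norm_add_smul {E : Type*} [SeminormedAddCommGroup E] [NormedSpace ℝ E]
    (u w : E) : ConvexOn ℝ univ fun t : ℝ => ‖u + t • w‖ := by
  have := convexOn_univ_norm.comp_affineMap
    (AffineMap.const ℝ ℝ u + (LinearMap.id.smulRight w : ℝ →ₗ[ℝ] E).toAffineMap)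
  exact this

section Radial

variable {E : Type*} [NormedAddCommGroup E] [NormedSpace ℝ E] {x y : E}

theorem norm_add_smul_inv_norm_smul (hx : x ≠ 0) {t : ℝ} (ht : -‖x‖ ≤ t) :
    ‖x + t • ‖x‖⁻¹ • x‖ = ‖x‖ + t := by
  have hx' : ‖x‖ ≠ 0 := norm_ne_zero_iff.mpr hx
  have : x + t • ‖x‖⁻¹ • x = ((‖x‖ + t) / ‖x‖) • x := by
    rw [add_div, div_self hx', add_smul, one_smul, smul_smul, div_eq_mul_inv]
  rw [this, norm_smul, Real.norm_of_nonneg (div_nonneg (by linarith) (norm_nonneg x)),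
    div_mul_cancel₀ _ hx']

/-- Moving `x` and `y` radially by the same amount `t` leaves `‖x‖ - ‖y‖` unchanged, so by the
reverse triangle inequality `|‖x‖ - ‖y‖|` bounds the distance from below; at `t = -min ‖x‖ ‖y‖`
one of the two points reaches the origin and the bound is attained. -/
theorem isMinOn_norm_sub_add_smul_sub_inv_norm_smul (hx : x ≠ 0) (hy : y ≠ 0) :
    IsMinOn (fun t : ℝ => ‖(x - y) + t • (‖x‖⁻¹ • x - ‖y‖⁻¹ • y)‖)
      (Ici (-min ‖x‖ ‖y‖)) (-min ‖x‖ ‖y‖) := by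
  set m := min ‖x‖ ‖y‖
  have hxm : m ≤ ‖x‖ := min_le_left _ _
  have hym : m ≤ ‖y‖ := min_le_right _ _
  have hsplit (t : ℝ) : (x - y) + t • (‖x‖⁻¹ • x - ‖y‖⁻¹ • y)
      = (x + t • ‖x‖⁻¹ • x) - (y + t • ‖y‖⁻¹ • y) := by module
  have hnx {t : ℝ} (ht : -m ≤ t) := norm_add_smul_inv_norm_smul hx (by linarith : -‖x‖ ≤ t)
  have hny {t : ℝ} (ht : -m ≤ t) := norm_add_smul_inv_norm_smul hy (by linarith : -‖y‖ ≤ t)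
  have hlower (t : ℝ) (ht : -m ≤ t) :
      |‖x‖ - ‖y‖| ≤ ‖(x - y) + t • (‖x‖⁻¹ • x - ‖y‖⁻¹ • y)‖ := by
    rw [hsplit, ← add_sub_add_right_eq_sub ‖x‖ ‖y‖ t, ← hnx ht, ← hny ht]
    exact abs_norm_sub_norm_le _ _
  have hattained : ‖(x - y) + (-m) • (‖x‖⁻¹ • x - ‖y‖⁻¹ • y)‖ = |‖x‖ - ‖y‖| := by
    rw [hsplit]
    rcases (min_choice ‖x‖ ‖y‖ : m = ‖x‖ ∨ m = ‖y‖) with h | h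
    · have hx0 : x + (-m) • ‖x‖⁻¹ • x = 0 := norm_eq_zero.mp (by rw [hnx le_rfl]; linarith)
      rw [hx0, zero_sub, norm_neg, hny le_rfl, abs_of_nonpos (by linarith)]
      linarith
    · have hy0 : y + (-m) • ‖y‖⁻¹ • y = 0 := norm_eq_zero.mp (by rw [hny le_rfl]; linarith)
      rw [hy0, sub_zero, hnx le_rfl, abs_of_nonneg (by linarith)]
      linarith
  exact fun t ht => hattained.trans_le (hlower t ht)

end Radial

/-- Semi-monotonicity of the radial projection: for nonzero `x, y` in a normed space,
`t ↦ ‖(x - y) + t • (x/‖x‖ - y/‖y‖)‖` is nondecreasing on `[-min ‖x‖ ‖y‖, ∞)`; in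
particular `‖(x - y) + t • (x/‖x‖ - y/‖y‖)‖ ≥ ‖x - y‖` for all `t ≥ 0`. -/
theorem stmt_11 {X : Type*} [NormedAddCommGroup X] [NormedSpace ℝ X]
    (x y : X) (hx : x ≠ 0) (hy : y ≠ 0) :
    MonotoneOn (fun t : ℝ => ‖(x - y) + t • (‖x‖⁻¹ • x - ‖y‖⁻¹ • y)‖)
        (Set.Ici (-(min ‖x‖ ‖y‖))) ∧
      ∀ t : ℝ, 0 ≤ t → ‖x - y‖ ≤ ‖(x - y) + t • (‖x‖⁻¹ • x - ‖y‖⁻¹ • y)‖ := by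
  have hconvex := (convexOn_norm_add_smul (x - y) (‖x‖⁻¹ • x - ‖y‖⁻¹ • y)).subset
    (subset_univ _) (convex_Ici (-min ‖x‖ ‖y‖))
  have hmono := hconvex.monotoneOn_Ici_of_isMinOn
    (isMinOn_norm_sub_add_smul_sub_inv_norm_smul hx hy)
  have hm : -min ‖x‖ ‖y‖ ≤ 0 := neg_nonpos.mpr (le_min (norm_nonneg x) (norm_nonneg y))
  refine ⟨hmono, fun t ht => ?_⟩
  simpa using hmono hm (hm.trans ht) ht
end

section
/- For every n ≥ 3 there exist finite subsets x, y ⊆ ℝ, each with exactly n elements, such that x ≠ y and for every nonempty finite subset z ⊆ ℝ with at most n elements, d_H(x, y) ≤ max(d_H(x, z), d_H(z, y)). That is, the finite subset space ℝ(n) contains spaced pairs for all n ≥ 3. -/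
/-!
Take `n + 1` points `0, 2, 4, …, 2n` on the even lattice. Let `x` keep all of them except `4, 6`,
which it replaces by their midpoint `5`, and let `y` keep all of them except `0, 2`, replaced by
their midpoint `1`. Then `d_H(x, y) ≤ 1`, and every lattice point lies in `x ∪ y`. If some `z`
came within distance `< 1` of both `x` and `y`, each of the `n + 1` lattice points would have a
point of `z` within distance `< 1`; since the lattice points are `2` apart these points of `z`
are distinct, so `z` has more than `n` elements.
-/

open Metric Set Bornology

section PseudoMetricSpace

variable {α : Type*} [PseudoMetricSpace α]

theorem encard_le_of_forall_exists_dist_lt {D z : Set α} {r : ℝ}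
    (hsep : D.Pairwise fun p q => 2 * r ≤ dist p q) (hnear : ∀ p ∈ D, ∃ w ∈ z, dist p w < r) :
    D.encard ≤ z.encard := by
  choose! w hwz hw using hnear
  refine encard_le_encard_of_injOn (fun p hp => hwz p hp) fun p hp q hq hpq => ?_
  by_contra hne
  have hclose : dist p q < 2 * r := calc
    dist p q ≤ dist p (w p) + dist q (w q) := hpq ▸ dist_triangle_right p q (w p)
    _ < r + r := add_lt_add (hw p hp) (hw q hq)
    _ = 2 * r := (two_mul r).symm
  exact (hsep hp hq hne).not_gt hclose

theorem hausdorffDist_le_max_of_separated {x y z D : Set α} {r : ℝ}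
    (hx : x.Nonempty) (hy : y.Nonempty) (hz : z.Nonempty)
    (hxb : IsBounded x) (hyb : IsBounded y) (hzb : IsBounded z)
    (hxy : hausdorffDist x y ≤ r) (hDxy : D ⊆ x ∪ y)
    (hsep : D.Pairwise fun p q => 2 * r ≤ dist p q) (hcard : z.encard < D.encard) :
    hausdorffDist x y ≤ max (hausdorffDist x z) (hausdorffDist z y) := by
  by_contra! hlt
  have hxz : hausdorffDist x z < r := (le_max_left _ _).trans_lt (hlt.trans_le hxy)
  have hzy : hausdorffDist z y < r := (le_max_right _ _).trans_lt (hlt.trans_le hxy)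
  have hnear : ∀ p ∈ D, ∃ w ∈ z, dist p w < r := by
    intro p hp
    rcases hDxy hp with hpx | hpy
    · exact exists_dist_lt_of_hausdorffDist_lt hpx hxz
        (hausdorffEDist_ne_top_of_nonempty_of_bounded hx hz hxb hzb)
    · obtain ⟨w, hw, hwp⟩ := exists_dist_lt_of_hausdorffDist_lt' hpy hzy
        (hausdorffEDist_ne_top_of_nonempty_of_bounded hz hy hzb hyb)
      exact ⟨w, hw, dist_comm p w ▸ hwp⟩
  exact (encard_le_of_forall_exists_dist_lt hsep hnear).not_gt hcard

end PseudoMetricSpace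

noncomputable def evenPoints (N : ℕ) : Finset ℝ :=
  (Finset.range N).image fun k : ℕ => 2 * (k : ℝ)

theorem mem_evenPoints {N : ℕ} {p : ℝ} : p ∈ evenPoints N ↔ ∃ k < N, 2 * (k : ℝ) = p := by
  simp [evenPoints]

theorem card_evenPoints (N : ℕ) : (evenPoints N).card = N := by
  rw [evenPoints, Finset.card_image_of_injective _ fun k l h => by simpa using h,
    Finset.card_range]

theorem two_mul_natCast_add_one_notMem_evenPoints (N k : ℕ) :
    2 * (k : ℝ) + 1 ∉ evenPoints N := by
  intro h
  obtain ⟨l, -, h⟩ := mem_evenPoints.1 h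
  have : 2 * l = 2 * k + 1 := by exact_mod_cast h
  omega

theorem pairwise_two_le_dist_evenPoints (N : ℕ) :
    (evenPoints N : Set ℝ).Pairwise fun p q => 2 ≤ dist p q := by
  intro p hp q hq hpq
  obtain ⟨k, -, rfl⟩ := mem_evenPoints.1 hp
  obtain ⟨l, -, rfl⟩ := mem_evenPoints.1 hq
  have hkl : k ≠ l := by rintro rfl; exact hpq rfl
  rw [Real.dist_eq, le_abs]
  rcases hkl.lt_or_gt with hlt | hgt
  · have : (k : ℝ) + 1 ≤ l := by exact_mod_cast hlt
    right; linarith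
  · have : (l : ℝ) + 1 ≤ k := by exact_mod_cast hgt
    left; linarith

theorem zero_two_four_six_mem_evenPoints (m : ℕ) :
    (0 : ℝ) ∈ evenPoints (m + 4) ∧ (2 : ℝ) ∈ evenPoints (m + 4) ∧
      (4 : ℝ) ∈ evenPoints (m + 4) ∧ (6 : ℝ) ∈ evenPoints (m + 4) :=
  ⟨mem_evenPoints.2 ⟨0, by omega, by norm_num⟩, mem_evenPoints.2 ⟨1, by omega, by norm_num⟩,
    mem_evenPoints.2 ⟨2, by omega, by norm_num⟩, mem_evenPoints.2 ⟨3, by omega, by norm_num⟩⟩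

theorem one_notMem_evenPoints (N : ℕ) : (1 : ℝ) ∉ evenPoints N := by
  simpa using two_mul_natCast_add_one_notMem_evenPoints N 0

theorem five_notMem_evenPoints (N : ℕ) : (5 : ℝ) ∉ evenPoints N := by
  convert two_mul_natCast_add_one_notMem_evenPoints N 2 using 1
  norm_num

noncomputable def spacedLeft (m : ℕ) : Finset ℝ := insert 5 (evenPoints (m + 4) \ {4, 6})

noncomputable def spacedRight (m : ℕ) : Finset ℝ := insert 1 (evenPoints (m + 4) \ {0, 2})

theorem card_spacedLeft (m : ℕ) : (spacedLeft m).card = m + 3 := by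
  obtain ⟨-, -, h4, h6⟩ := zero_two_four_six_mem_evenPoints m
  have h5 : (5 : ℝ) ∉ evenPoints (m + 4) \ {4, 6} :=
    fun h => five_notMem_evenPoints _ (Finset.sdiff_subset h)
  rw [spacedLeft, Finset.card_insert_of_notMem h5,
    Finset.card_sdiff_of_subset (Finset.insert_subset h4 (Finset.singleton_subset_iff.2 h6)),
    card_evenPoints, Finset.card_pair (by norm_num)]
  omega

theorem card_spacedRight (m : ℕ) : (spacedRight m).card = m + 3 := by
  obtain ⟨h0, h2, -, -⟩ := zero_two_four_six_mem_evenPoints m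
  have h1 : (1 : ℝ) ∉ evenPoints (m + 4) \ {0, 2} :=
    fun h => one_notMem_evenPoints _ (Finset.sdiff_subset h)
  rw [spacedRight, Finset.card_insert_of_notMem h1,
    Finset.card_sdiff_of_subset (Finset.insert_subset h0 (Finset.singleton_subset_iff.2 h2)),
    card_evenPoints, Finset.card_pair (by norm_num)]
  omega

theorem hausdorffDist_spacedLeft_spacedRight_le (m : ℕ) :
    hausdorffDist (spacedLeft m : Set ℝ) (spacedRight m) ≤ 1 := by
  obtain ⟨h0, -, h4, -⟩ := zero_two_four_six_mem_evenPoints m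
  apply hausdorffDist_le_of_mem_dist zero_le_one
  · intro p hp
    simp only [spacedLeft, Finset.coe_insert, Finset.coe_sdiff, mem_insert_iff, mem_sdiff,
      Finset.mem_coe, Finset.mem_singleton] at hp
    rcases hp with rfl | ⟨hp, hp46⟩
    · exact ⟨4, by simp [spacedRight, h4], by norm_num [Real.dist_eq]⟩
    · by_cases hp02 : p = 0 ∨ p = 2
      · refine ⟨1, by simp [spacedRight], ?_⟩
        rcases hp02 with rfl | rfl <;> norm_num [Real.dist_eq]
      · exact ⟨p, by simp_all [spacedRight], by simp⟩
  · intro q hq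
    simp only [spacedRight, Finset.coe_insert, Finset.coe_sdiff, mem_insert_iff, mem_sdiff,
      Finset.mem_coe, Finset.mem_singleton] at hq
    rcases hq with rfl | ⟨hq, hq02⟩
    · exact ⟨0, by simp [spacedLeft, h0], by norm_num [Real.dist_eq]⟩
    · by_cases hq46 : q = 4 ∨ q = 6
      · refine ⟨5, by simp [spacedLeft], ?_⟩
        rcases hq46 with rfl | rfl <;> norm_num [Real.dist_eq]
      · exact ⟨q, by simp_all [spacedLeft], by simp⟩

theorem evenPoints_subset_spacedLeft_union_spacedRight (m : ℕ) :
    evenPoints (m + 4) ⊆ spacedLeft m ∪ spacedRight m := by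
  intro p hp
  by_cases hp46 : p = 4 ∨ p = 6
  · refine Finset.mem_union_right _ (Finset.mem_insert_of_mem (Finset.mem_sdiff.2 ⟨hp, ?_⟩))
    simp only [Finset.mem_insert, Finset.mem_singleton]
    rcases hp46 with rfl | rfl <;> norm_num
  · exact Finset.mem_union_left _ (Finset.mem_insert_of_mem (by simp_all))

/-- For every `n ≥ 3`, the finite subset space `ℝ(n)` contains a spaced pair:
two distinct `n`-element subsets `x, y` of `ℝ` with
`d_H(x,y) ≤ max (d_H(x,z)) (d_H(z,y))` for every nonempty `z` with at most `n`
elements. -/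
theorem stmt_13 (n : ℕ) (hn : 3 ≤ n) :
    ∃ x y : Set ℝ, x.encard = n ∧ y.encard = n ∧ x ≠ y ∧
      ∀ z : Set ℝ, z.Nonempty → z.encard ≤ n →
        Metric.hausdorffDist x y ≤
          max (Metric.hausdorffDist x z) (Metric.hausdorffDist z y) := by
  obtain ⟨m, rfl⟩ : ∃ m, n = m + 3 := ⟨n - 3, by omega⟩
  have five_mem : (5 : ℝ) ∈ spacedLeft m := Finset.mem_insert_self _ _
  have five_notMem : (5 : ℝ) ∉ spacedRight m := by
    simp [spacedRight, five_notMem_evenPoints]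
  refine ⟨spacedLeft m, spacedRight m, by simp [card_spacedLeft], by simp [card_spacedRight],
    fun h => five_notMem (Finset.coe_inj.1 h ▸ five_mem), fun z hz hzn => ?_⟩
  have hzb : IsBounded z := (finite_of_encard_le_coe hzn).isBounded
  refine hausdorffDist_le_max_of_separated ⟨5, five_mem⟩ ⟨1, Finset.mem_insert_self _ _⟩ hz
    (Finset.finite_toSet _).isBounded (Finset.finite_toSet _).isBounded hzb
    (hausdorffDist_spacedLeft_spacedRight_le m)
    (by exact_mod_cast evenPoints_subset_spacedLeft_union_spacedRight m)
    ((pairwise_two_le_dist_evenPoints _).mono' fun _ _ h => (mul_one 2).trans_le h) ?_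
  rw [encard_coe_eq_coe_finsetCard, card_evenPoints]
  exact hzn.trans_lt (by norm_cast; omega)
end

section
/- Let X be a metric space and let x, y be nonempty finite subsets of X. Then there exist subsets x' ⊆ x and y'' ⊆ y and maps f : x' → y and g : y'' → x such that dist(a, f(a)) ≤ d_H(x, y) for all a ∈ x', dist(g(b), b) ≤ d_H(x, y) for all b ∈ y'', and x = x' ∪ g(y'') with x' ∩ g(y'') = ∅, y = f(x') ∪ y'' with f(x') ∩ y'' = ∅. -/
/-!
Join each point to a partner within distance `d_H(x, y)`; it suffices to find a spanning forest
of stars in this bipartite relation. Pick `φ : x → y` along the relation whose range misses as few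
points of `y` as possible, and let `C ⊆ x` consist of partners of the missed points. By
minimality, each point of `C` is the only `φ`-preimage of its image (otherwise redirecting it to
a missed point would shrink the set of missed points). The stars are then centred at the points
of `C`, with the missed points and the `φ`-images of `C` as leaves, and at the points of
`φ(x \ C)`, with their `φ`-preimages as leaves.
-/

open Set Metric Function

section StarDecomposition

variable {α β : Type*} (R : α → β → Prop) {s : Set α} {t : Set β}

theorem exists_map_unique_preimage_of_rel_missed [Nonempty β] (ht : t.Finite)
    (hst : ∀ a ∈ s, ∃ b ∈ t, R a b) :
    ∃ φ : α → β, (∀ a ∈ s, φ a ∈ t ∧ R a (φ a)) ∧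
      ∀ a ∈ s, ∀ b ∈ t \ φ '' s, R a b → ∀ a' ∈ s, φ a' = φ a → a' = a := by
  classical
  choose! φ₀ hφ₀ using hst
  obtain ⟨φ, hφ, hmin⟩ := (measure fun φ : α → β => (t \ φ '' s).ncard).wf.has_min
    {φ | ∀ a ∈ s, φ a ∈ t ∧ R a (φ a)} ⟨φ₀, hφ₀⟩
  refine ⟨φ, hφ, fun a ha b ⟨hbt, hbφ⟩ hab a' ha' hφa' => by_contra fun hne => ?_⟩
  set φ' := update φ a b
  have hφ' : ∀ c ∈ s, φ' c ∈ t ∧ R c (φ' c) := by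
    intro c hc
    rcases eq_or_ne c a with rfl | hca
    · simpa [φ'] using ⟨hbt, hab⟩
    · simpa [φ', hca] using hφ c hc
  have hrange : insert b (φ '' s) ⊆ φ' '' s := by
    rintro _ (rfl | ⟨c, hc, rfl⟩)
    · exact ⟨a, ha, by simp [φ']⟩
    rcases eq_or_ne c a with rfl | hca
    · exact ⟨a', ha', by simp [φ', hne, hφa']⟩
    · exact ⟨c, hc, by simp [φ', hca]⟩
  have hsub : t \ φ' '' s ⊂ t \ φ '' s :=
    ssubset_of_subset_not_subset (sdiff_subset_sdiff_right ((subset_insert _ _).trans hrange))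
      fun h => (h ⟨hbt, hbφ⟩).2 (hrange (mem_insert b _))
  exact hmin φ' hφ' (ncard_lt_ncard hsub ht.sdiff)

theorem exists_star_decomposition [Nonempty α] [Nonempty β] (ht : t.Finite)
    (hst : ∀ a ∈ s, ∃ b ∈ t, R a b) (hts : ∀ b ∈ t, ∃ a ∈ s, R a b) :
    ∃ (s' : Set α) (t' : Set β) (f : α → β) (g : β → α), s' ⊆ s ∧ t' ⊆ t ∧
      (∀ a ∈ s', f a ∈ t ∧ R a (f a)) ∧
      (∀ b ∈ t', g b ∈ s ∧ R (g b) b) ∧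
      s = s' ∪ g '' t' ∧ s' ∩ g '' t' = ∅ ∧
      t = f '' s' ∪ t' ∧ f '' s' ∩ t' = ∅ := by
  classical
  obtain ⟨φ, hφ, hφinj⟩ := exists_map_unique_preimage_of_rel_missed R ht hst
  choose! ψ hψ using hts
  set U := t \ φ '' s
  set C := ψ '' U
  have hφs : φ '' s ⊆ t := image_subset_iff.2 fun a ha => (hφ a ha).1
  have hCs : C ⊆ s := image_subset_iff.2 fun b hb => (hψ b hb.1).1
  have hφC : φ '' C ⊆ φ '' s := image_mono hCs
  set g := U.piecewise ψ (invFunOn φ C)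
  have hg_U : ∀ b ∈ U, g b = ψ b := fun b hb => piecewise_eq_of_mem _ _ _ hb
  have hg_φC : ∀ b ∈ φ '' C, g b = invFunOn φ C b :=
    fun b hb => piecewise_eq_of_notMem _ _ _ fun hbU => hbU.2 (hφC hb)
  have hg_image : g '' (U ∪ φ '' C) = C := by
    refine (image_subset_iff.2 ?_).antisymm ?_
    · rintro b (hb | hb)
      · exact show g b ∈ C from (hg_U b hb).symm ▸ mem_image_of_mem ψ hb
      · exact show g b ∈ C from (hg_φC b hb).symm ▸ invFunOn_mem hb
    · rintro _ ⟨b, hb, rfl⟩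
      exact ⟨b, Or.inl hb, hg_U b hb⟩
  refine ⟨s \ C, U ∪ φ '' C, φ, g, sdiff_subset, union_subset sdiff_subset (hφC.trans hφs),
    fun a ha => hφ a ha.1, ?_, ?_, ?_, ?_, ?_⟩
  · intro b hb
    have hgb : g b ∈ C := hg_image ▸ mem_image_of_mem g hb
    refine ⟨hCs hgb, ?_⟩
    rcases hb with hb | hb
    · exact (hg_U b hb).symm ▸ (hψ b hb.1).2
    · simpa only [hg_φC b hb, invFunOn_eq hb] using (hφ (g b) (hCs hgb)).2
  · rw [hg_image, sdiff_union_of_subset hCs]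
  · rw [hg_image, sdiff_inter_self]
  · rw [← union_assoc, union_right_comm, ← image_union, sdiff_union_of_subset hCs,
      union_sdiff_cancel hφs]
  · refine eq_empty_of_forall_notMem ?_
    rintro _ ⟨⟨a, ⟨ha, haC⟩, rfl⟩, hU | ⟨c, hcC, hac⟩⟩
    · exact hU.2 (mem_image_of_mem φ ha)
    · obtain ⟨b, hb, rfl⟩ := hcC
      exact haC (hφinj (ψ b) (hψ b hb.1).1 b hb (hψ b hb.1).2 a ha hac.symm ▸ ⟨b, hb, rfl⟩)

end StarDecomposition

theorem IsCompact.exists_dist_le_hausdorffDist {X : Type*} [PseudoMetricSpace X] {x y : Set X}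
    (hy : IsCompact y) (hyne : y.Nonempty) (hx : Bornology.IsBounded x) {a : X} (ha : a ∈ x) :
    ∃ b ∈ y, dist a b ≤ hausdorffDist x y := by
  obtain ⟨b, hb, hdist⟩ := hy.exists_infDist_eq_dist hyne a
  refine ⟨b, hb, hdist ▸ infDist_le_hausdorffDist_of_mem ha ?_⟩
  exact hausdorffEDist_ne_top_of_nonempty_of_bounded ⟨a, ha⟩ hyne hx hy.isBounded

/-- For nonempty finite subsets `x, y` of a metric space there are proximal maps
`f : x' ⊆ x → y` and `g : y'' ⊆ y → x` with `x = x' ⊔ g(y'')` and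
`y = f(x') ⊔ y''`. -/
theorem stmt_15 {X : Type*} [MetricSpace X] (x y : Set X)
    (hxfin : x.Finite) (hyfin : y.Finite) (hxne : x.Nonempty) (hyne : y.Nonempty) :
    ∃ (x' y'' : Set X) (f g : X → X), x' ⊆ x ∧ y'' ⊆ y ∧
      (∀ a ∈ x', f a ∈ y ∧ dist a (f a) ≤ Metric.hausdorffDist x y) ∧
      (∀ b ∈ y'', g b ∈ x ∧ dist (g b) b ≤ Metric.hausdorffDist x y) ∧
      x = x' ∪ g '' y'' ∧ x' ∩ g '' y'' = ∅ ∧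
      y = f '' x' ∪ y'' ∧ f '' x' ∩ y'' = ∅ := by
  have : Nonempty X := ⟨hxne.some⟩
  refine exists_star_decomposition (fun a b => dist a b ≤ hausdorffDist x y) hyfin
    (fun a ha => hyfin.isCompact.exists_dist_le_hausdorffDist hyne hxfin.isBounded ha)
    fun b hb => ?_
  obtain ⟨a, ha, hdist⟩ := hxfin.isCompact.exists_dist_le_hausdorffDist hxne hyfin.isBounded hb
  exact ⟨a, ha, by rwa [dist_comm, hausdorffDist_comm]⟩
end

section
/- Let X be a geodesic metric space, let n ≥ 1 and λ > 0, and let x, y be nonempty subsets of X each with at most n elements. Suppose there is a relation R ⊆ x × y such that: every a ∈ x has some b ∈ y with (a,b) ∈ R and every b ∈ y has some a ∈ x with (a,b) ∈ R (completeness); R has at most n elements; and dist(a, b) ≤ λ·d_H(x, y) for all (a,b) ∈ R. Then there exists a path γ : [0,1] → X(n), i.e., each γ(t) is a nonempty subset of X with at most n elements, with γ(0) = x, γ(1) = y, and d_H(γ(s), γ(t)) ≤ λ·|s − t|·d_H(x, y) for all s, t ∈ [0,1]. -/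
/-!
Fix a constant-speed geodesic `η_(a,b)` for every pair `(a, b) ∈ R` and let `γ(t)` be the set of
points `η_(a,b)(t)`, `(a, b) ∈ R`. It has at most `#R ≤ n` elements, completeness of `R` gives
`γ(0) = x` and `γ(1) = y`, and matching `η_p(s)` with `η_p(t)` bounds `d_H(γ(s), γ(t))` by
`sup_{p ∈ R} |s - t| · dist p.1 p.2 ≤ λ |s - t| d_H(x, y)`.
-/

open Metric

lemma Set.image_fst_eq_of_forall_exists {α β : Type*} {R : Set (α × β)} {x : Set α}
    (hR : ∀ p ∈ R, p.1 ∈ x) (hx : ∀ a ∈ x, ∃ b, (a, b) ∈ R) : Prod.fst '' R = x := by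
  refine Set.Subset.antisymm (Set.image_subset_iff.2 hR) fun a ha => ?_
  obtain ⟨b, hab⟩ := hx a ha
  exact ⟨(a, b), hab, rfl⟩

lemma Set.image_snd_eq_of_forall_exists {α β : Type*} {R : Set (α × β)} {y : Set β}
    (hR : ∀ p ∈ R, p.2 ∈ y) (hy : ∀ b ∈ y, ∃ a, (a, b) ∈ R) : Prod.snd '' R = y := by
  refine Set.Subset.antisymm (Set.image_subset_iff.2 hR) fun b hb => ?_
  obtain ⟨a, hab⟩ := hy b hb
  exact ⟨(a, b), hab, rfl⟩

lemma Metric.hausdorffDist_image_le_of_dist_le {ι X : Type*} [PseudoMetricSpace X]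
    {S : Set ι} {f g : ι → X} {r : ℝ} (hS : S.Nonempty)
    (h : ∀ i ∈ S, dist (f i) (g i) ≤ r) :
    hausdorffDist (f '' S) (g '' S) ≤ r := by
  obtain ⟨i, hi⟩ := hS
  refine hausdorffDist_le_of_mem_dist (dist_nonneg.trans (h i hi)) ?_ ?_
  · rintro _ ⟨j, hj, rfl⟩
    exact ⟨g j, Set.mem_image_of_mem g hj, h j hj⟩
  · rintro _ ⟨j, hj, rfl⟩
    exact ⟨f j, Set.mem_image_of_mem f hj, dist_comm (g j) (f j) ▸ h j hj⟩

theorem stmt_16_general {X : Type*} [MetricSpace X]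
    (hgeo : ∀ a b : X, ∃ η : ℝ → X, η 0 = a ∧ η 1 = b ∧
      ∀ s ∈ Set.Icc (0 : ℝ) 1, ∀ t ∈ Set.Icc (0 : ℝ) 1,
        dist (η s) (η t) = |s - t| * dist a b)
    (n : ℕ) (l : ℝ)
    (x y : Set X) (hxne : x.Nonempty)
    (R : Set (X × X)) (hRsub : R ⊆ x ×ˢ y)
    (hcompl : ∀ a ∈ x, ∃ b ∈ y, (a, b) ∈ R)
    (hcompr : ∀ b ∈ y, ∃ a ∈ x, (a, b) ∈ R)
    (hRcard : R.encard ≤ n)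
    (hRprox : ∀ p ∈ R, dist p.1 p.2 ≤ l * Metric.hausdorffDist x y) :
    ∃ γ : ℝ → Set X, γ 0 = x ∧ γ 1 = y ∧
      (∀ t ∈ Set.Icc (0 : ℝ) 1, (γ t).Nonempty ∧ (γ t).encard ≤ n) ∧
      (∀ s ∈ Set.Icc (0 : ℝ) 1, ∀ t ∈ Set.Icc (0 : ℝ) 1,
        Metric.hausdorffDist (γ s) (γ t) ≤ l * |s - t| * Metric.hausdorffDist x y) := by
  choose η hη0 hη1 hηdist using fun p : X × X => hgeo p.1 p.2
  have hRne : R.Nonempty := by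
    obtain ⟨a, ha⟩ := hxne
    obtain ⟨b, -, hab⟩ := hcompl a ha
    exact ⟨(a, b), hab⟩
  refine ⟨fun t => (η · t) '' R, ?_, ?_,
    fun t _ => ⟨hRne.image _, (Set.encard_image_le _ _).trans hRcard⟩,
    fun s hs t ht => hausdorffDist_image_le_of_dist_le hRne fun p hp => ?_⟩
  · refine (Set.image_congr fun p _ => hη0 p).trans ?_
    exact Set.image_fst_eq_of_forall_exists (fun p hp => (hRsub hp).1)
      fun a ha => (hcompl a ha).imp fun _ => And.right
  · refine (Set.image_congr fun p _ => hη1 p).trans ?_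
    exact Set.image_snd_eq_of_forall_exists (fun p hp => (hRsub hp).2)
      fun b hb => (hcompr b hb).imp fun _ => And.right
  · calc dist (η p s) (η p t) = |s - t| * dist p.1 p.2 := hηdist p s hs t ht
      _ ≤ |s - t| * (l * hausdorffDist x y) := by gcongr; exact hRprox p hp
      _ = l * |s - t| * hausdorffDist x y := by ring

/-- Sufficient condition for quasigeodesics in `X(n)`: if `x, y ∈ X(n)` over a
geodesic space `X` admit a complete relation `R ⊆ x × y` with at most `n` elements
all of whose pairs are at distance at most `λ · d_H(x,y)`, then `x` and `y` are
joined by a `λ`-quasigeodesic in `X(n)`. -/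
theorem stmt_16 {X : Type*} [MetricSpace X]
    (hgeo : ∀ a b : X, ∃ η : ℝ → X, η 0 = a ∧ η 1 = b ∧
      ∀ s ∈ Set.Icc (0 : ℝ) 1, ∀ t ∈ Set.Icc (0 : ℝ) 1,
        dist (η s) (η t) = |s - t| * dist a b)
    (n : ℕ) (hn : 1 ≤ n) (l : ℝ) (hl : 0 < l)
    (x y : Set X) (hxne : x.Nonempty) (hxcard : x.encard ≤ n)
    (hyne : y.Nonempty) (hycard : y.encard ≤ n)
    (R : Set (X × X)) (hRsub : R ⊆ x ×ˢ y)
    (hcompl : ∀ a ∈ x, ∃ b ∈ y, (a, b) ∈ R)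
    (hcompr : ∀ b ∈ y, ∃ a ∈ x, (a, b) ∈ R)
    (hRcard : R.encard ≤ n)
    (hRprox : ∀ p ∈ R, dist p.1 p.2 ≤ l * Metric.hausdorffDist x y) :
    ∃ γ : ℝ → Set X, γ 0 = x ∧ γ 1 = y ∧
      (∀ t ∈ Set.Icc (0 : ℝ) 1, (γ t).Nonempty ∧ (γ t).encard ≤ n) ∧
      (∀ s ∈ Set.Icc (0 : ℝ) 1, ∀ t ∈ Set.Icc (0 : ℝ) 1,
        Metric.hausdorffDist (γ s) (γ t) ≤ l * |s - t| * Metric.hausdorffDist x y) :=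
  stmt_16_general hgeo n l x y hxne R hRsub hcompl hcompr hRcard hRprox
end
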